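/- arXiv:math/0610734 — 3 statements merged into one kernel-verified Lean document; each statement's English description precedes it below -/
import Mathlib

section
/- Let F_w(z) be the generating function (in the variable z, weight z^n for walks ending at (2n,0)) for walks with steps (1,1),(1,-1),(2,2),(2,-2) from (0,0) to the x-axis confined to 0 ≤ y ≤ w. Then for all w ≥ 4, F_w satisfies the fifth-order nonlinear recurrence F_w = 1 - z·F_w + 2z·F_w F_{w-1} + 2z²·F_w F_{w-1} F_{w-2} - (z³+z⁴)·F_w F_{w-1} F_{w-2} F_{w-3} + z⁵·F_w F_{w-1} F_{w-2} F_{w-3} F_{w-4}, as an identity of formal power series. -/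
open PowerSeries

/-- Heights visited by a walk starting at height `i` with the given steps
(second coordinate is the vertical displacement of a step). -/
def heights (i : ℤ) (l : List (ℤ × ℤ)) : List ℤ :=
  l.scanl (fun h st => h + st.2) i

/-- `IsWalk S w i j l` : `l` is a walk with steps from `S`, starting at height `i`,
ending at height `j`, with all visited heights in the strip `0 ≤ y ≤ w`. -/
def IsWalk (S : Set (ℤ × ℤ)) (w i j : ℤ) (l : List (ℤ × ℤ)) : Prop :=
  (∀ st ∈ l, st ∈ S) ∧ (∀ h ∈ heights i l, 0 ≤ h ∧ h ≤ w) ∧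
    i + (l.map Prod.snd).sum = j

/-- Number of walks with steps in `S`, width `w`, from height `i` to height `j`,
with total horizontal displacement `L`. -/
noncomputable def walkCount (S : Set (ℤ × ℤ)) (w i j L : ℤ) : ℕ :=
  Set.ncard {l : List (ℤ × ℤ) | IsWalk S w i j l ∧ (l.map Prod.fst).sum = L}

def dyckSteps : Set (ℤ × ℤ) := {(1, 1), (1, -1)}

def bballSteps : Set (ℤ × ℤ) := {(1, 1), (1, -1), (2, 2), (2, -2)}

/-- Generating function of basketball walks of width `w` from `(0,0)` to `(2n,0)`,
weight `z^n`. -/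
noncomputable def F (w : ℕ) : PowerSeries ℚ :=
  PowerSeries.mk fun n => (walkCount bballSteps w 0 0 (2 * n) : ℚ)



def cnt (w : ℕ) : ℤ → ℤ → ℕ → ℕ
  | i, j, 0 => if 0 ≤ i ∧ i ≤ w ∧ i = j then 1 else 0
  | i, j, 1 => if 0 ≤ i ∧ i ≤ w then cnt w (i-1) j 0 + cnt w (i+1) j 0 else 0
  | i, j, (L+2) => if 0 ≤ i ∧ i ≤ w then
      cnt w (i-1) j (L+1) + cnt w (i+1) j (L+1) + cnt w (i-2) j L + cnt w (i+2) j L else 0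

lemma cnt_out_i {w : ℕ} {i j : ℤ} (h : ¬ (0 ≤ i ∧ i ≤ w)) (L : ℕ) : cnt w i j L = 0 := by
  match L with
  | 0 => rw [cnt]; rw [if_neg]; tauto
  | 1 => rw [cnt]; rw [if_neg h]
  | (L+2) => rw [cnt]; rw [if_neg h]

lemma cnt_out_j {w : ℕ} {j : ℤ} (h : ¬ (0 ≤ j ∧ j ≤ w)) : ∀ (L : ℕ) (i : ℤ), cnt w i j L = 0 := by
  intro L
  induction L using Nat.strong_induction_on with
  | _ L ih =>
    intro i
    match L with
    | 0 =>
      rw [cnt]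
      rw [if_neg]; rintro ⟨h1, h2, rfl⟩; exact h ⟨h1, h2⟩
    | 1 => rw [cnt]; split <;> simp [ih 0 (by omega)]
    | (L+2) => rw [cnt]; split <;> simp [ih (L+1) (by omega), ih L (by omega)]

lemma cnt_parity {w : ℕ} : ∀ (L : ℕ) (i j : ℤ), ¬ (2 ∣ (i + j + L)) → cnt w i j L = 0 := by
  intro L
  induction L using Nat.strong_induction_on with
  | _ L ih =>
    intro i j hpar
    match L with
    | 0 =>
      rw [cnt]; rw [if_neg]; rintro ⟨h1, h2, rfl⟩; apply hpar; push_cast; omega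
    | 1 =>
      rw [cnt]; split
      · rw [ih 0 (by omega) (i-1) j (by push_cast at hpar ⊢; omega),
          ih 0 (by omega) (i+1) j (by push_cast at hpar ⊢; omega)]
      · rfl
    | (L+2) =>
      rw [cnt]; split
      · rw [ih (L+1) (by omega) (i-1) j (by push_cast at hpar ⊢; omega),
          ih (L+1) (by omega) (i+1) j (by push_cast at hpar ⊢; omega),
          ih L (by omega) (i-2) j (by push_cast at hpar ⊢; omega),
          ih L (by omega) (i+2) j (by push_cast at hpar ⊢; omega)]
      · rfl

-- membership
lemma mem_bball {st : ℤ × ℤ} : st ∈ bballSteps ↔ st = (1,1) ∨ st = (1,-1) ∨ st = (2,2) ∨ st = (2,-2) := by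
  simp [bballSteps]

lemma bball_fst_pos {st : ℤ × ℤ} (h : st ∈ bballSteps) : 1 ≤ st.1 := by
  rcases mem_bball.1 h with rfl | rfl | rfl | rfl <;> norm_num

lemma sum_ge_length {l : List (ℤ × ℤ)} (h : ∀ st ∈ l, st ∈ bballSteps) :
    (l.length : ℤ) ≤ (l.map Prod.fst).sum := by
  induction l with
  | nil => simp
  | cons st l ih =>
    simp only [List.map_cons, List.sum_cons, List.length_cons]
    have h1 := bball_fst_pos (h st (by simp))
    have h2 := ih (fun s hs => h s (List.mem_cons_of_mem _ hs))
    push_cast; omega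

lemma bball_finite : bballSteps.Finite := by
  unfold bballSteps
  exact (((Set.finite_singleton _).insert _).insert _).insert _

lemma lists_finite : ∀ n : ℕ, {l : List (ℤ × ℤ) | (∀ st ∈ l, st ∈ bballSteps) ∧ l.length ≤ n}.Finite := by
  intro n
  induction n with
  | zero =>
    apply Set.Finite.subset (Set.finite_singleton [])
    rintro l ⟨-, hl⟩
    simp at hl ⊢; exact hl
  | succ n ih =>
    apply Set.Finite.subset ((Set.finite_singleton []).union
      (Set.Finite.biUnion bball_finite (fun st _ => ih.image (st :: ·))))
    rintro l ⟨hmem, hlen⟩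
    match l with
    | [] => exact Or.inl rfl
    | (st :: l') =>
      refine Or.inr (Set.mem_biUnion (hmem st (by simp)) ⟨l', ⟨?_, ?_⟩, rfl⟩)
      · exact fun s hs => hmem s (List.mem_cons_of_mem _ hs)
      · simpa using hlen

lemma walkSet_finite (w i j L : ℤ) :
    {l : List (ℤ × ℤ) | IsWalk bballSteps w i j l ∧ (l.map Prod.fst).sum = L}.Finite := by
  apply Set.Finite.subset (lists_finite L.toNat)
  rintro l ⟨⟨hmem, -, -⟩, hsum⟩
  refine ⟨hmem, ?_⟩
  have := sum_ge_length hmem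
  omega

lemma walkCount_neg {w i j L : ℤ} (hL : L < 0) : walkCount bballSteps w i j L = 0 := by
  unfold walkCount
  rw [Set.ncard_eq_zero (walkSet_finite w i j L)]
  ext l
  simp only [Set.mem_setOf_eq, Set.mem_empty_iff_false, iff_false]
  rintro ⟨⟨hmem, -, -⟩, hsum⟩
  have := sum_ge_length hmem
  omega

lemma heights_nil (i : ℤ) : heights i [] = [i] := rfl

lemma heights_cons (i : ℤ) (st : ℤ × ℤ) (l : List (ℤ × ℤ)) :
    heights i (st :: l) = i :: heights (i + st.2) l := by
  simp [heights, List.scanl_cons]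

lemma isWalk_cons {w i j : ℤ} {st : ℤ × ℤ} {l : List (ℤ × ℤ)} :
    IsWalk bballSteps w i j (st :: l) ↔
      st ∈ bballSteps ∧ (0 ≤ i ∧ i ≤ w) ∧ IsWalk bballSteps w (i + st.2) j l := by
  unfold IsWalk
  rw [heights_cons]
  simp only [List.mem_cons, List.map_cons, List.sum_cons]
  constructor
  · rintro ⟨hmem, hh, hsum⟩
    refine ⟨hmem st (Or.inl rfl), hh i (Or.inl rfl),
      fun s hs => hmem s (Or.inr hs), fun h hh' => hh h (Or.inr hh'), by omega⟩
  · rintro ⟨hst, hi, hmem, hh, hsum⟩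
    refine ⟨?_, ?_, by omega⟩
    · rintro s (rfl | hs); exact hst; exact hmem s hs
    · rintro h (rfl | hh'); exact hi; exact hh h hh'

lemma isWalk_nil {w i j : ℤ} : IsWalk bballSteps w i j [] ↔ (0 ≤ i ∧ i ≤ w ∧ i = j) := by
  unfold IsWalk
  rw [heights_nil]
  simp; tauto

def wset (w i j d : ℤ) : Set (List (ℤ × ℤ)) :=
  {l : List (ℤ × ℤ) | IsWalk bballSteps w i j l ∧ (l.map Prod.fst).sum = d}

lemma walkCount_eq_wset (w i j d : ℤ) : walkCount bballSteps w i j d = (wset w i j d).ncard := rfl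

lemma wset_finite (w i j d : ℤ) : (wset w i j d).Finite := walkSet_finite w i j d

def aset (w : ℤ) (j : ℤ) (st : ℤ × ℤ) (i' d : ℤ) : Set (List (ℤ × ℤ)) :=
  (st :: ·) '' wset w i' j d

lemma aset_ncard (w j : ℤ) (st : ℤ × ℤ) (i' d : ℤ) :
    (aset w j st i' d).ncard = walkCount bballSteps w i' j d :=
  Set.ncard_image_of_injective _ List.cons_injective

lemma aset_finite (w j : ℤ) (st : ℤ × ℤ) (i' d : ℤ) : (aset w j st i' d).Finite :=
  (wset_finite _ _ _ _).image _

lemma aset_disjoint (w j : ℤ) {st st' : ℤ × ℤ} (h : st ≠ st') (i1 d1 i2 d2 : ℤ) :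
    Disjoint (aset w j st i1 d1) (aset w j st' i2 d2) := by
  rw [Set.disjoint_left]
  rintro l ⟨l1, -, rfl⟩ ⟨l2, -, heq⟩
  exact h (List.cons_eq_cons.mp heq).1.symm

lemma walkCount_step (w : ℕ) (i j L : ℤ) (hL : 1 ≤ L) :
    walkCount bballSteps w i j L =
      if 0 ≤ i ∧ i ≤ (w : ℤ) then
        walkCount bballSteps w (i+1) j (L-1) + walkCount bballSteps w (i-1) j (L-1)
        + walkCount bballSteps w (i+2) j (L-2) + walkCount bballSteps w (i-2) j (L-2)
      else 0 := by
  by_cases hi : 0 ≤ i ∧ i ≤ (w : ℤ)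
  · rw [if_pos hi]
    have hsplit : wset w i j L =
        aset w j (1,1) (i+1) (L-1) ∪ (aset w j (1,-1) (i-1) (L-1) ∪
        (aset w j (2,2) (i+2) (L-2) ∪ aset w j (2,-2) (i-2) (L-2))) := by
      ext l
      constructor
      · rintro ⟨hw', hsum⟩
        match l with
        | [] =>
          exfalso; simp only [List.map_nil, List.sum_nil] at hsum; omega
        | (st :: l') =>
          obtain ⟨hst, -, hw''⟩ := isWalk_cons.1 hw'
          simp only [List.map_cons, List.sum_cons] at hsum
          rcases mem_bball.1 hst with rfl | rfl | rfl | rfl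
          · exact Or.inl ⟨l', ⟨hw'', by simp only [Prod.fst] at hsum ⊢; omega⟩, rfl⟩
          · exact Or.inr (Or.inl ⟨l', ⟨hw'', by simp only [Prod.fst] at hsum ⊢; omega⟩, rfl⟩)
          · exact Or.inr (Or.inr (Or.inl ⟨l', ⟨hw'', by simp only [Prod.fst] at hsum ⊢; omega⟩, rfl⟩))
          · exact Or.inr (Or.inr (Or.inr ⟨l', ⟨hw'', by simp only [Prod.fst] at hsum ⊢; omega⟩, rfl⟩))
      · rintro (⟨l', ⟨hw', hsum⟩, rfl⟩ | ⟨l', ⟨hw', hsum⟩, rfl⟩ |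
          ⟨l', ⟨hw', hsum⟩, rfl⟩ | ⟨l', ⟨hw', hsum⟩, rfl⟩) <;>
        · refine ⟨isWalk_cons.2 ⟨by simp [mem_bball], hi, hw'⟩, ?_⟩
          simp only [List.map_cons, List.sum_cons, Prod.fst] at hsum ⊢
          omega
    rw [walkCount_eq_wset, hsplit]
    rw [Set.ncard_union_eq (by
        rw [Set.disjoint_union_right, Set.disjoint_union_right]
        exact ⟨aset_disjoint w j (by decide) _ _ _ _, aset_disjoint w j (by decide) _ _ _ _,
          aset_disjoint w j (by decide) _ _ _ _⟩)
      (aset_finite _ _ _ _ _) (((aset_finite _ _ _ _ _).union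
        ((aset_finite _ _ _ _ _).union (aset_finite _ _ _ _ _))))]
    rw [Set.ncard_union_eq (by
        rw [Set.disjoint_union_right]
        exact ⟨aset_disjoint w j (by decide) _ _ _ _, aset_disjoint w j (by decide) _ _ _ _⟩)
      (aset_finite _ _ _ _ _) ((aset_finite _ _ _ _ _).union (aset_finite _ _ _ _ _))]
    rw [Set.ncard_union_eq (aset_disjoint w j (by decide) _ _ _ _)
      (aset_finite _ _ _ _ _) (aset_finite _ _ _ _ _)]
    rw [aset_ncard, aset_ncard, aset_ncard, aset_ncard]
    ring
  · rw [if_neg hi]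
    rw [walkCount_eq_wset, Set.ncard_eq_zero (wset_finite _ _ _ _)]
    ext l
    simp only [wset, Set.mem_setOf_eq, Set.mem_empty_iff_false, iff_false]
    rintro ⟨hw', hsum⟩
    match l with
    | [] => simp only [List.map_nil, List.sum_nil] at hsum; omega
    | (st :: l') => exact hi (isWalk_cons.1 hw').2.1

lemma walkCount_zero (w : ℕ) (i j : ℤ) :
    walkCount bballSteps w i j 0 = if 0 ≤ i ∧ i ≤ (w:ℤ) ∧ i = j then 1 else 0 := by
  rw [walkCount_eq_wset]
  by_cases h : 0 ≤ i ∧ i ≤ (w:ℤ) ∧ i = j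
  · rw [if_pos h]
    have : wset w i j 0 = {[]} := by
      ext l
      simp only [wset, Set.mem_setOf_eq, Set.mem_singleton_iff]
      constructor
      · rintro ⟨⟨hmem, -, -⟩, hsum⟩
        match l with
        | [] => rfl
        | (st :: l') =>
          exfalso
          have := sum_ge_length hmem
          simp only [List.length_cons] at this
          omega
      · rintro rfl
        exact ⟨isWalk_nil.2 h, by simp⟩
    rw [this, Set.ncard_singleton]
  · rw [if_neg h, Set.ncard_eq_zero (wset_finite _ _ _ _)]
    ext l
    simp only [wset, Set.mem_setOf_eq, Set.mem_empty_iff_false, iff_false]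
    rintro ⟨hw', hsum⟩
    match l with
    | [] => exact h (isWalk_nil.1 hw')
    | (st :: l') =>
      have := sum_ge_length hw'.1
      simp only [List.length_cons] at this
      omega

lemma bridge (w : ℕ) : ∀ (L : ℕ) (i j : ℤ),
    walkCount bballSteps w i j L = cnt w i j L := by
  intro L
  induction L using Nat.strong_induction_on with
  | _ L ih =>
    intro i j
    match L with
    | 0 =>
      have : ((0:ℕ):ℤ) = 0 := rfl
      rw [this, walkCount_zero, cnt]
    | 1 =>
      have hc : ((1:ℕ):ℤ) = 1 := rfl
      rw [hc, walkCount_step w i j 1 (by norm_num), cnt]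
      have h1 : (1:ℤ) - 1 = ((0:ℕ):ℤ) := by norm_num
      have h2 : (1:ℤ) - 2 = (-1:ℤ) := by norm_num
      rw [h1, h2, walkCount_neg (L := -1) (by norm_num), walkCount_neg (L := -1) (by norm_num),
        ih 0 (by omega), ih 0 (by omega)]
      split <;> omega
    | (M+2) =>
      rw [walkCount_step w i j (M+2 : ℕ) (by push_cast; omega), cnt]
      have h1 : ((M+2:ℕ):ℤ) - 1 = ((M+1:ℕ):ℤ) := by push_cast; ring
      have h2 : ((M+2:ℕ):ℤ) - 2 = ((M:ℕ):ℤ) := by push_cast; ring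
      rw [h1, h2, ih (M+1) (by omega), ih (M+1) (by omega), ih M (by omega), ih M (by omega)]
      split <;> omega

noncomputable def gf (w : ℕ) (i j : ℤ) : PowerSeries ℚ := PowerSeries.mk fun L => (cnt w i j L : ℚ)

lemma coeff_gf (w : ℕ) (i j : ℤ) (n : ℕ) : (PowerSeries.coeff (R := ℚ) n) (gf w i j) = (cnt w i j n : ℚ) :=
  PowerSeries.coeff_mk _ _

lemma gf_out_i {w : ℕ} {i j : ℤ} (h : ¬ (0 ≤ i ∧ i ≤ w)) : gf w i j = 0 := by
  apply PowerSeries.ext; intro n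
  rw [coeff_gf, cnt_out_i h]; simp

lemma gf_out_j {w : ℕ} {i j : ℤ} (h : ¬ (0 ≤ j ∧ j ≤ w)) : gf w i j = 0 := by
  apply PowerSeries.ext; intro n
  rw [coeff_gf, cnt_out_j h]; simp

lemma coeff_X_mul' (f : PowerSeries ℚ) (n : ℕ) :
    (PowerSeries.coeff (R := ℚ) n) (PowerSeries.X * f) =
      if 1 ≤ n then (PowerSeries.coeff (R := ℚ) (n-1)) f else 0 := by
  have := PowerSeries.coeff_X_pow_mul' f 1 n
  simpa using this

lemma coeff_X2_mul' (f : PowerSeries ℚ) (n : ℕ) :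
    (PowerSeries.coeff (R := ℚ) n) (PowerSeries.X^2 * f) =
      if 2 ≤ n then (PowerSeries.coeff (R := ℚ) (n-2)) f else 0 :=
  PowerSeries.coeff_X_pow_mul' f 2 n

lemma sysI (w : ℕ) (i j : ℤ) (hi : 0 ≤ i) (hi' : i ≤ w) :
    gf w i j = (if i = j then 1 else 0)
      + PowerSeries.X * (gf w (i-1) j + gf w (i+1) j)
      + PowerSeries.X^2 * (gf w (i-2) j + gf w (i+2) j) := by
  apply PowerSeries.ext; intro n
  rw [map_add, map_add, coeff_X_mul', coeff_X2_mul', map_add, map_add, coeff_gf]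
  have hguard : (0 ≤ i ∧ i ≤ (w:ℤ)) := ⟨hi, hi'⟩
  have hcoeffif : (PowerSeries.coeff (R := ℚ) n) (if i = j then (1 : PowerSeries ℚ) else 0)
      = if n = 0 then (if i = j then (1:ℚ) else 0) else 0 := by
    split_ifs with h1 h2 h2 <;> simp_all [PowerSeries.coeff_one]
  rw [hcoeffif]
  match n with
  | 0 =>
    rw [cnt]
    by_cases hij : i = j
    · rw [if_pos (by exact ⟨hi, hi', hij⟩), if_pos hij]; norm_num
    · rw [if_neg (by tauto), if_neg hij]; norm_num
  | 1 =>
    rw [cnt, if_pos hguard]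
    simp only [coeff_gf]
    norm_num
  | (m+2) =>
    rw [cnt, if_pos hguard]
    simp only [coeff_gf]
    have h1 : (m+2) - 1 = m + 1 := rfl
    have h2 : (m+2) - 2 = m := rfl
    rw [h1, h2, if_pos (show (1:ℕ) ≤ m+2 by omega), if_pos (show (2:ℕ) ≤ m+2 by omega),
      if_neg (show ¬ (m+2 = 0) by omega)]
    push_cast
    ring

lemma uniq (w : ℕ) (e h h' : ℤ → PowerSeries ℚ)
    (hv : ∀ j : ℤ, ¬ (0 ≤ j ∧ j ≤ (w:ℤ)) → h j = 0) (hv' : ∀ j : ℤ, ¬ (0 ≤ j ∧ j ≤ (w:ℤ)) → h' j = 0)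
    (he : ∀ j : ℤ, 0 ≤ j → j ≤ (w:ℤ) → h j = e j
      + PowerSeries.X * (h (j-1) + h (j+1)) + PowerSeries.X^2 * (h (j-2) + h (j+2)))
    (he' : ∀ j : ℤ, 0 ≤ j → j ≤ (w:ℤ) → h' j = e j
      + PowerSeries.X * (h' (j-1) + h' (j+1)) + PowerSeries.X^2 * (h' (j-2) + h' (j+2))) :
    ∀ j : ℤ, h j = h' j := by
  have key : ∀ (n : ℕ) (j : ℤ), (PowerSeries.coeff (R := ℚ) n) (h j) = (PowerSeries.coeff (R := ℚ) n) (h' j) := by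
    intro n
    induction n using Nat.strong_induction_on with
    | _ n ih =>
      intro j
      by_cases hj : 0 ≤ j ∧ j ≤ (w:ℤ)
      · rw [he j hj.1 hj.2, he' j hj.1 hj.2]
        rw [map_add, map_add, map_add, map_add, coeff_X_mul', coeff_X_mul',
          coeff_X2_mul', coeff_X2_mul']
        congr 1
        congr 1
        · split_ifs with hn
          · rw [map_add, map_add, ih (n-1) (by omega) (j-1), ih (n-1) (by omega) (j+1)]
          · rfl
        · split_ifs with hn
          · rw [map_add, map_add, ih (n-2) (by omega) (j-2), ih (n-2) (by omega) (j+2)]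
          · rfl
      · rw [hv j hj, hv' j hj]
  intro j
  exact PowerSeries.ext (fun n => key n j)

open PowerSeries in
lemma sysJ_all (w : ℕ) (j : ℤ) (hj : 0 ≤ j) (hj' : j ≤ (w:ℤ)) :
    ∀ i : ℤ, gf w i j = (if i = j then 1 else 0)
      + X * (gf w i (j-1) + gf w i (j+1)) + X^2 * (gf w i (j-2) + gf w i (j+2)) := by
  apply uniq w (fun i => if i = j then 1 else 0) (fun i => gf w i j)
    (fun i => (if i = j then 1 else 0)
      + X * (gf w i (j-1) + gf w i (j+1)) + X^2 * (gf w i (j-2) + gf w i (j+2)))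
  · exact fun i hi => gf_out_i hi
  · intro i hi
    rw [gf_out_i hi, gf_out_i hi, gf_out_i hi, gf_out_i hi,
      if_neg (show ¬ i = j by omega)]
    ring
  · exact fun i hi hi' => sysI w i j hi hi'
  · intro i hi hi'
    rw [sysI w i (j-1) hi hi', sysI w i (j+1) hi hi', sysI w i (j-2) hi hi',
      sysI w i (j+2) hi hi']
    rw [show (if i = j-1 then (1:PowerSeries ℚ) else 0) = (if i+1 = j then 1 else 0) from
        if_congr (show (i = j-1) ↔ (i+1 = j) by constructor <;> (intro h; omega)) rfl rfl,
      show (if i = j+1 then (1:PowerSeries ℚ) else 0) = (if i-1 = j then 1 else 0) from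
        if_congr (show (i = j+1) ↔ (i-1 = j) by constructor <;> (intro h; omega)) rfl rfl,
      show (if i = j-2 then (1:PowerSeries ℚ) else 0) = (if i+2 = j then 1 else 0) from
        if_congr (show (i = j-2) ↔ (i+2 = j) by constructor <;> (intro h; omega)) rfl rfl,
      show (if i = j+2 then (1:PowerSeries ℚ) else 0) = (if i-2 = j then 1 else 0) from
        if_congr (show (i = j+2) ↔ (i-2 = j) by constructor <;> (intro h; omega)) rfl rfl]
    ring

open PowerSeries in
lemma gf_symm (w : ℕ) (i j : ℤ) : gf w i j = gf w j i := by
  by_cases hj : 0 ≤ j ∧ j ≤ (w:ℤ)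
  · refine uniq w (fun k => if k = j then 1 else 0) (fun k => gf w k j) (fun k => gf w j k)
      (fun k hk => gf_out_i hk) (fun k hk => gf_out_j hk)
      (fun k hk hk' => sysI w k j hk hk') ?_ i
    intro k hk hk'
    beta_reduce
    have := sysJ_all w k hk hk' j
    rw [this]
    rw [show (if j = k then (1:PowerSeries ℚ) else 0) = (if k = j then 1 else 0) from
      if_congr (show (j = k) ↔ (k = j) from eq_comm) rfl rfl]
  · rw [gf_out_j hj, gf_out_i hj]

open PowerSeries in
lemma msplit (w : ℕ) (i : ℤ) (hi : 1 ≤ i) (hi' : i ≤ (w:ℤ)+1) (j : ℤ) :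
    gf (w+1) j i = gf w (j-1) (i-1)
      + gf (w+1) j 0 * (X * gf w 0 (i-1) + X^2 * gf w 1 (i-1)) := by
  have hcast : ((w+1 : ℕ) : ℤ) = (w:ℤ)+1 := by push_cast; ring
  refine uniq (w+1) (fun j => if j = i then 1 else 0) (fun j => gf (w+1) j i)
    (fun j => gf w (j-1) (i-1) + gf (w+1) j 0 * (X * gf w 0 (i-1) + X^2 * gf w 1 (i-1)))
    (fun j hj => gf_out_i hj) ?_ (fun j hj hj' => sysI (w+1) j i hj (by omega)) ?_ j
  · intro j hj
    rw [hcast] at hj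
    beta_reduce
    rw [gf_out_i (show ¬ (0 ≤ j-1 ∧ j-1 ≤ (w:ℤ)) by omega),
      gf_out_i (show ¬ (0 ≤ j ∧ j ≤ ((w+1:ℕ):ℤ)) by omega)]
    ring
  · intro j hj hj'
    rw [hcast] at hj'
    beta_reduce
    rw [show (j:ℤ)-1-1 = j-2 from by ring, show (j:ℤ)+1-1 = j from by ring,
      show (j:ℤ)-2-1 = j-3 from by ring, show (j:ℤ)+2-1 = j+1 from by ring]
    rcases (show j = 0 ∨ 1 ≤ j by omega) with rfl | hj1
    · norm_num
      rw [gf_out_i (show ¬ (0 ≤ (-1:ℤ) ∧ (-1:ℤ) ≤ (w:ℤ)) by omega),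
        gf_out_i (show ¬ (0 ≤ (-2:ℤ) ∧ (-2:ℤ) ≤ (w:ℤ)) by omega),
        gf_out_i (show ¬ (0 ≤ (-3:ℤ) ∧ (-3:ℤ) ≤ (w:ℤ)) by omega),
        gf_out_i (show ¬ (0 ≤ (-1:ℤ) ∧ (-1:ℤ) ≤ ((w+1:ℕ):ℤ)) by omega),
        gf_out_i (show ¬ (0 ≤ (-2:ℤ) ∧ (-2:ℤ) ≤ ((w+1:ℕ):ℤ)) by omega)]
      rw [sysI (w+1) 0 0 (by norm_num) (by omega)]
      rw [show (0:ℤ)-1 = -1 from by ring, show (0:ℤ)-2 = -2 from by ring,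
        show (0:ℤ)+1 = 1 from by ring, show (0:ℤ)+2 = 2 from by ring]
      rw [gf_out_i (show ¬ (0 ≤ (-1:ℤ) ∧ (-1:ℤ) ≤ ((w+1:ℕ):ℤ)) by omega),
        gf_out_i (show ¬ (0 ≤ (-2:ℤ) ∧ (-2:ℤ) ≤ ((w+1:ℕ):ℤ)) by omega),
        if_neg (show ¬ (0:ℤ) = i by omega), if_pos rfl]
      ring
    · rw [sysI w (j-1) (i-1) (by omega) (by omega), sysI (w+1) j 0 (by omega) (by omega)]
      rw [show (if j-1 = i-1 then (1:PowerSeries ℚ) else 0) = (if j = i then 1 else 0) from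
          if_congr (show (j-1 = i-1) ↔ (j = i) by constructor <;> (intro h; omega)) rfl rfl,
        if_neg (show ¬ j = (0:ℤ) by omega)]
      rw [show (j:ℤ)-1-1 = j-2 from by ring, show (j:ℤ)-1+1 = j from by ring,
        show (j:ℤ)-1-2 = j-3 from by ring, show (j:ℤ)-1+2 = j+1 from by ring]
      ring

noncomputable def al (w : ℕ) : PowerSeries ℚ := gf w 0 0
noncomputable def be (w : ℕ) : PowerSeries ℚ := gf w 0 1
noncomputable def ga (w : ℕ) : PowerSeries ℚ := gf w 1 1

open PowerSeries in
lemma Rbeta (w : ℕ) : be (w+1) = al (w+1) * (X * al w + X^2 * be w) := by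
  have h := msplit w 1 (by norm_num) (by push_cast; omega) 0
  rw [show (0:ℤ)-1 = -1 from by ring, show (1:ℤ)-1 = 0 from by ring] at h
  rw [gf_out_i (show ¬ (0 ≤ (-1:ℤ) ∧ (-1:ℤ) ≤ (w:ℤ)) by omega)] at h
  rw [gf_symm w 1 0] at h
  unfold be al
  rw [h]; ring

open PowerSeries in
lemma Rgamma (w : ℕ) : ga (w+1) = al w + al (w+1) * (X * al w + X^2 * be w)^2 := by
  have h := msplit w 1 (by norm_num) (by push_cast; omega) 1
  rw [show (1:ℤ)-1 = 0 from by ring] at h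
  rw [gf_symm w 1 0, gf_symm (w+1) 1 0] at h
  have hb := Rbeta w
  unfold be al at hb
  rw [hb] at h
  unfold ga al be
  rw [h]; ring

open PowerSeries in
lemma Ralpha (w : ℕ) : al (w+2) = 1 + al (w+2) *
    (X * (X * al (w+1) + X^2 * be (w+1)) + X^2 * (X * be (w+1) + X^2 * ga (w+1))) := by
  have h := sysI (w+2) 0 0 (by norm_num) (by positivity)
  rw [show (0:ℤ)-1 = -1 from by ring, show (0:ℤ)-2 = -2 from by ring,
    show (0:ℤ)+1 = 1 from by ring, show (0:ℤ)+2 = 2 from by ring,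
    gf_out_i (show ¬ (0 ≤ (-1:ℤ) ∧ (-1:ℤ) ≤ ((w+2:ℕ):ℤ)) by omega),
    gf_out_i (show ¬ (0 ≤ (-2:ℤ) ∧ (-2:ℤ) ≤ ((w+2:ℕ):ℤ)) by omega),
    if_pos rfl] at h
  rw [gf_symm (w+2) 1 0, gf_symm (w+2) 2 0] at h
  have h1 : gf (w+2) 0 1 = al (w+2) * (X * al (w+1) + X^2 * be (w+1)) := by
    have := Rbeta (w+1)
    rw [show w+1+1 = w+2 from rfl] at this
    exact this
  have h2 : gf (w+2) 0 2 = al (w+2) * (X * be (w+1) + X^2 * ga (w+1)) := by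
    have h := msplit (w+1) 2 (by norm_num) (by push_cast; omega) 0
    rw [show w+1+1 = w+2 from rfl, show (0:ℤ)-1 = -1 from by ring,
      show (2:ℤ)-1 = 1 from by ring] at h
    rw [gf_out_i (show ¬ (0 ≤ (-1:ℤ) ∧ (-1:ℤ) ≤ ((w+1:ℕ):ℤ)) by omega)] at h
    unfold al be ga
    rw [h]; ring
  rw [h1, h2] at h
  have hg : al (w+2) = 1 + X * (0 + al (w+2) * (X * al (w+1) + X^2 * be (w+1)))
      + X^2 * (0 + al (w+2) * (X * be (w+1) + X^2 * ga (w+1))) := h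
  linear_combination hg

lemma key_alg {R : Type*} [CommRing R] (X a0 a1 a2 a3 a4 b1 b2 b3 b4 c1 c2 c3 : R)
    (e1 : a0 = 1 + a0*(X*(X*a1 + X^2*b1) + X^2*(X*b1 + X^2*c1)))
    (e2 : a1 = 1 + a1*(X*(X*a2 + X^2*b2) + X^2*(X*b2 + X^2*c2)))
    (e3 : a2 = 1 + a2*(X*(X*a3 + X^2*b3) + X^2*(X*b3 + X^2*c3)))
    (eb1 : b1 = a1*(X*a2 + X^2*b2)) (ec1 : c1 = a2 + a1*(X*a2+X^2*b2)^2)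
    (eb2 : b2 = a2*(X*a3 + X^2*b3)) (ec2 : c2 = a3 + a2*(X*a3+X^2*b3)^2)
    (eb3 : b3 = a3*(X*a4 + X^2*b4)) (ec3 : c3 = a4 + a3*(X*a4+X^2*b4)^2) :
    a0 = 1 - X^2*a0 + 2*X^2*a0*a1 + 2*X^4*a0*a1*a2
      - (X^6+X^8)*a0*a1*a2*a3 + X^10*a0*a1*a2*a3*a4 := by
  subst eb1; subst ec1; subst eb2; subst ec2; subst eb3; subst ec3
  linear_combination e1 - a0*(X^2 + X^4*a2)*e2 + a0*a1*X^6*a3*e3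

open PowerSeries in
lemma tfinal (v : ℕ) : al (v+4) = 1 - X^2*al (v+4) + 2*X^2*al (v+4)*al (v+3)
    + 2*X^4*al (v+4)*al (v+3)*al (v+2)
    - (X^6+X^8)*al (v+4)*al (v+3)*al (v+2)*al (v+1)
    + X^10*al (v+4)*al (v+3)*al (v+2)*al (v+1)*al v := by
  have e1 := Ralpha (v+2)
  have e2 := Ralpha (v+1)
  have e3 := Ralpha v
  rw [show v+2+2 = v+4 from rfl, show v+2+1 = v+3 from rfl] at e1
  rw [show v+1+2 = v+3 from rfl, show v+1+1 = v+2 from rfl] at e2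
  exact key_alg X (al (v+4)) (al (v+3)) (al (v+2)) (al (v+1)) (al v)
    (be (v+3)) (be (v+2)) (be (v+1)) (be v) (ga (v+3)) (ga (v+2)) (ga (v+1))
    e1 e2 e3
    (by have := Rbeta (v+2); rw [show v+2+1 = v+3 from rfl] at this; exact this)
    (by have := Rgamma (v+2); rw [show v+2+1 = v+3 from rfl] at this; exact this)
    (by have := Rbeta (v+1); rw [show v+1+1 = v+2 from rfl] at this; exact this)
    (by have := Rgamma (v+1); rw [show v+1+1 = v+2 from rfl] at this; exact this)
    (Rbeta v) (Rgamma v)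

noncomputable def phiFun (f : PowerSeries ℚ) : PowerSeries ℚ :=
  PowerSeries.mk fun m => if 2 ∣ m then (PowerSeries.coeff (R := ℚ) (m/2)) f else 0

lemma phiFun_coeff (f : PowerSeries ℚ) (m : ℕ) :
    (PowerSeries.coeff (R := ℚ) m) (phiFun f) = if 2 ∣ m then (PowerSeries.coeff (R := ℚ) (m/2)) f else 0 :=
  PowerSeries.coeff_mk _ _

lemma phiFun_one : phiFun 1 = 1 := by
  apply PowerSeries.ext; intro m
  rw [phiFun_coeff]
  by_cases h1 : 2 ∣ m
  · rw [if_pos h1, PowerSeries.coeff_one, PowerSeries.coeff_one]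
    by_cases h0 : m = 0
    · subst h0; norm_num
    · rw [if_neg (show ¬ m/2 = 0 by omega), if_neg h0]
  · rw [if_neg h1, PowerSeries.coeff_one, if_neg (show ¬ m = 0 by omega)]

lemma phiFun_add (f g : PowerSeries ℚ) : phiFun (f + g) = phiFun f + phiFun g := by
  apply PowerSeries.ext; intro m
  rw [map_add, phiFun_coeff, phiFun_coeff, phiFun_coeff]
  split_ifs with h
  · rw [map_add]
  · rw [add_zero]

lemma phiFun_mul (f g : PowerSeries ℚ) : phiFun (f * g) = phiFun f * phiFun g := by
  apply PowerSeries.ext; intro m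
  rw [phiFun_coeff]
  by_cases hm : 2 ∣ m
  · obtain ⟨k, rfl⟩ := hm
    rw [if_pos ⟨k, rfl⟩, show 2 * k / 2 = k by omega,
      PowerSeries.coeff_mul, PowerSeries.coeff_mul,
      Finset.Nat.sum_antidiagonal_eq_sum_range_succ_mk,
      Finset.Nat.sum_antidiagonal_eq_sum_range_succ_mk]
    rw [show Finset.range (2*k+1) = (Finset.range (k+1)).image (fun a => 2*a) ∪
        ((Finset.range (2*k+1)).filter (fun i => ¬ 2 ∣ i)) from ?_]
    · rw [Finset.sum_union ?_]
      · have hz : ∀ i ∈ (Finset.range (2*k+1)).filter (fun i => ¬ 2 ∣ i),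
            (PowerSeries.coeff (R := ℚ) i) (phiFun f) * (PowerSeries.coeff (R := ℚ) (2*k - i)) (phiFun g) = 0 := by
          intro i hi
          simp only [Finset.mem_filter, Finset.mem_range] at hi
          rw [phiFun_coeff, if_neg hi.2, zero_mul]
        rw [Finset.sum_eq_zero hz, add_zero,
          Finset.sum_image (by intro a _ b _ h; simp only at h; omega)]
        apply Finset.sum_congr rfl
        intro a ha
        simp only [Finset.mem_range] at ha
        rw [phiFun_coeff, phiFun_coeff, if_pos ⟨a, rfl⟩, if_pos (show 2 ∣ 2*k - 2*a by omega),
          show 2*a/2 = a by omega, show (2*k - 2*a)/2 = k - a by omega]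
      · rw [Finset.disjoint_left]
        intro x hx hx'
        simp only [Finset.mem_image, Finset.mem_range] at hx
        simp only [Finset.mem_filter] at hx'
        obtain ⟨a, -, rfl⟩ := hx
        exact hx'.2 ⟨a, rfl⟩
    · ext x
      simp only [Finset.mem_range, Finset.mem_union, Finset.mem_image, Finset.mem_filter,
        Finset.mem_range]
      constructor
      · intro hx
        by_cases h2 : 2 ∣ x
        · obtain ⟨a, rfl⟩ := h2
          exact Or.inl ⟨a, by omega, rfl⟩
        · exact Or.inr ⟨hx, h2⟩
      · rintro (⟨a, ha, rfl⟩ | ⟨hx, -⟩) <;> omega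
  · rw [if_neg hm, PowerSeries.coeff_mul, Finset.Nat.sum_antidiagonal_eq_sum_range_succ_mk]
    symm
    apply Finset.sum_eq_zero
    intro i hi
    simp only [Finset.mem_range] at hi
    rw [phiFun_coeff, phiFun_coeff]
    by_cases h2 : 2 ∣ i
    · rw [if_neg (show ¬ 2 ∣ m - i by omega), mul_zero]
    · rw [if_neg h2, zero_mul]

noncomputable def phi : PowerSeries ℚ →+* PowerSeries ℚ where
  toFun := phiFun
  map_one' := phiFun_one
  map_mul' := phiFun_mul
  map_zero' := by
    apply PowerSeries.ext; intro m
    rw [phiFun_coeff]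
    simp
  map_add' := phiFun_add

lemma phi_coeff (f : PowerSeries ℚ) (m : ℕ) :
    (PowerSeries.coeff (R := ℚ) m) (phi f) = if 2 ∣ m then (PowerSeries.coeff (R := ℚ) (m/2)) f else 0 :=
  phiFun_coeff f m

lemma phi_inj : Function.Injective phi := by
  intro f g h
  apply PowerSeries.ext; intro n
  have := congrArg (PowerSeries.coeff (R := ℚ) (2*n)) h
  rw [phi_coeff, phi_coeff, if_pos ⟨n, rfl⟩, if_pos ⟨n, rfl⟩,
    show 2*n/2 = n by omega] at this
  exact this

lemma phi_X : phi PowerSeries.X = PowerSeries.X^2 := by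
  apply PowerSeries.ext; intro m
  rw [phi_coeff, PowerSeries.coeff_X_pow]
  split_ifs with h1 h2 h2
  · rw [PowerSeries.coeff_X, if_pos (by omega)]
  · rw [PowerSeries.coeff_X, if_neg (by omega)]
  · omega
  · rfl

lemma phi_F (w : ℕ) : phi (F w) = al w := by
  apply PowerSeries.ext; intro m
  rw [phi_coeff]
  unfold al
  rw [coeff_gf]
  by_cases h : 2 ∣ m
  · rw [if_pos h]
    unfold F
    rw [PowerSeries.coeff_mk]
    have hcast : (2 * ((m/2 : ℕ) : ℤ)) = ((m : ℕ) : ℤ) := by omega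
    rw [hcast, bridge w m 0 0]
  · rw [if_neg h, cnt_parity m 0 0 (by
      intro hc
      apply h
      have : ((m : ℤ)) = 0 + 0 + m := by ring
      rw [← this] at hc
      exact_mod_cast hc)]
    simp


theorem bball_fifth_order_recurrence : ∀ w : ℕ, 4 ≤ w →
    F w = 1 - PowerSeries.X * F w + 2 * PowerSeries.X * F w * F (w - 1)
      + 2 * PowerSeries.X ^ 2 * F w * F (w - 1) * F (w - 2)
      - (PowerSeries.X ^ 3 + PowerSeries.X ^ 4) * F w * F (w - 1) * F (w - 2) * F (w - 3)
      + PowerSeries.X ^ 5 * F w * F (w - 1) * F (w - 2) * F (w - 3) * F (w - 4) := by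
  intro w hw
  obtain ⟨v, rfl⟩ : ∃ v, w = v + 4 := ⟨w - 4, by omega⟩
  apply phi_inj
  rw [show v + 4 - 1 = v + 3 from rfl, show v + 4 - 2 = v + 2 from rfl,
    show v + 4 - 3 = v + 1 from rfl, show v + 4 - 4 = v from rfl]
  have h2 : phi 2 = 2 := by
    rw [show (2 : PowerSeries ℚ) = 1 + 1 by norm_num, map_add, map_one]
  simp only [map_add, map_sub, map_mul, map_pow, map_one, h2, phi_X, phi_F]
  exact (tfinal v).trans (by ring)
end

section
/- Define polynomials Q_w(z) by Q_0=1, Q_1=1-z, Q_2=1-2z-3z², Q_3=1-3z-5z²-2z³+z⁴, Q_4=1-4z-6z²+2z³, and for w ≥ 5 by the linear recurrence Q_w = (1+z)Q_{w-1} - 2z·Q_{w-2} - 2z²·Q_{w-3} + (z³+z⁴)·Q_{w-4} - z⁵·Q_{w-5}. Then for every w ≥ 1, the generating function F_w of basketball walks of width w equals Q_{w-1}/Q_w as a formal power series; in particular Q_w·F_w = Q_{w-1}. -/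
open PowerSeries

noncomputable def Q : ℕ → Polynomial ℚ
  | 0 => 1
  | 1 => 1 - Polynomial.X
  | 2 => 1 - 2 * Polynomial.X - 3 * Polynomial.X ^ 2
  | 3 => 1 - 3 * Polynomial.X - 5 * Polynomial.X ^ 2 - 2 * Polynomial.X ^ 3 + Polynomial.X ^ 4
  | 4 => 1 - 4 * Polynomial.X - 6 * Polynomial.X ^ 2 + 2 * Polynomial.X ^ 3
  | (n + 5) => (1 + Polynomial.X) * Q (n + 4) - 2 * Polynomial.X * Q (n + 3)
      - 2 * Polynomial.X ^ 2 * Q (n + 2) + (Polynomial.X ^ 3 + Polynomial.X ^ 4) * Q (n + 1)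
      - Polynomial.X ^ 5 * Q n

namespace BBall

abbrev Step := (ℤ × ℤ)

def WSet (w : ℕ) (i L : ℤ) : Set (List Step) :=
  {l | IsWalk bballSteps (w : ℤ) i 0 l ∧ (l.map Prod.fst).sum = L}

noncomputable def cnt (w : ℕ) (i L : ℤ) : ℕ := (WSet w i L).ncard

lemma cnt_eq_walkCount (w : ℕ) (i L : ℤ) : cnt w i L = walkCount bballSteps (w : ℤ) i 0 L := rfl

lemma mem_bball {st : Step} :
    st ∈ bballSteps ↔ st = (1,1) ∨ st = (1,-1) ∨ st = (2,2) ∨ st = (2,-2) := by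
  simp [bballSteps]

lemma bball_finite : bballSteps.Finite := by
  unfold bballSteps
  exact Set.Finite.insert _ (Set.Finite.insert _ (Set.Finite.insert _ (Set.finite_singleton _)))

lemma heights_nil (i : ℤ) : heights i [] = [i] := rfl

lemma heights_cons (i : ℤ) (st : Step) (l : List Step) :
    heights i (st :: l) = i :: heights (i + st.2) l := by
  simp [heights, List.scanl_cons]

lemma isWalk_nil {S : Set Step} {w i j : ℤ} :
    IsWalk S w i j [] ↔ (0 ≤ i ∧ i ≤ w) ∧ i = j := by
  simp [IsWalk, heights_nil]

lemma isWalk_cons {S : Set Step} {w i j : ℤ} {st : Step} {l : List Step} :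
    IsWalk S w i j (st :: l) ↔ st ∈ S ∧ (0 ≤ i ∧ i ≤ w) ∧ IsWalk S w (i + st.2) j l := by
  constructor
  · rintro ⟨hs, hh, he⟩
    have hi := hh i (by rw [heights_cons]; exact List.mem_cons_self)
    refine ⟨hs st (List.mem_cons_self), hi,
      fun st' h => hs st' (List.mem_cons_of_mem _ h),
      fun h hm => hh h (by rw [heights_cons]; exact List.mem_cons_of_mem _ hm), ?_⟩
    simp only [List.map_cons, List.sum_cons, ← add_assoc] at he
    exact he
  · rintro ⟨hst, ⟨h0, hw⟩, hs, hh, he⟩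
    refine ⟨?_, ?_, ?_⟩
    · intro st' h
      rcases List.mem_cons.1 h with rfl | h
      · exact hst
      · exact hs _ h
    · intro h hm
      rw [heights_cons] at hm
      rcases List.mem_cons.1 hm with rfl | hm
      · exact ⟨h0, hw⟩
      · exact hh _ hm
    · simp only [List.map_cons, List.sum_cons, ← add_assoc]
      exact he

lemma length_le_sum {l : List Step} (h : ∀ st ∈ l, st ∈ bballSteps) :
    (l.length : ℤ) ≤ (l.map Prod.fst).sum := by
  induction l with
  | nil => simp
  | cons st l ih =>
    have h1 : 1 ≤ st.1 := by
      rcases mem_bball.1 (h st (List.mem_cons_self)) with rfl | rfl | rfl | rfl <;> norm_num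
    have h2 := ih (fun s hs => h s (List.mem_cons_of_mem _ hs))
    simp only [List.length_cons, List.map_cons, List.sum_cons]
    push_cast
    omega

lemma finite_bounded (n : ℕ) :
    {l : List Step | (∀ st ∈ l, st ∈ bballSteps) ∧ l.length ≤ n}.Finite := by
  induction n with
  | zero =>
    apply Set.Finite.subset (Set.finite_singleton ([] : List Step))
    rintro l ⟨-, hl⟩
    have : l = [] := by
      cases l with
      | nil => rfl
      | cons a l => simp at hl
    simp [this]
  | succ n ih =>
    apply Set.Finite.subset ((Set.finite_singleton ([] : List Step)).union
      (Set.Finite.biUnion bball_finite (fun st _ => ih.image (st :: ·))))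
    rintro l ⟨hsteps, hlen⟩
    cases l with
    | nil => exact Or.inl rfl
    | cons st l' =>
      refine Or.inr (Set.mem_biUnion (hsteps st (List.mem_cons_self)) ?_)
      exact ⟨l', ⟨fun s hs => hsteps s (List.mem_cons_of_mem _ hs), by simpa using hlen⟩, rfl⟩

lemma wset_finite (w : ℕ) (i L : ℤ) : (WSet w i L).Finite := by
  apply (finite_bounded L.toNat).subset
  rintro l ⟨⟨hs, -, -⟩, hsum⟩
  have := length_le_sum hs
  exact ⟨hs, by omega⟩

lemma wset_out {w : ℕ} {i L : ℤ} (h : i < 0 ∨ (w : ℤ) < i) : WSet w i L = ∅ := by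
  ext l
  simp only [WSet, Set.mem_setOf_eq, Set.mem_empty_iff_false, iff_false, not_and]
  rintro ⟨-, hh, -⟩
  have hi := hh i (by cases l <;> simp [heights_nil, heights_cons])
  omega

lemma cnt_out {w : ℕ} {i L : ℤ} (h : i < 0 ∨ (w : ℤ) < i) : cnt w i L = 0 := by
  rw [cnt, wset_out h]; simp

lemma wset_neg {w : ℕ} {i L : ℤ} (h : L < 0) : WSet w i L = ∅ := by
  ext l
  simp only [WSet, Set.mem_setOf_eq, Set.mem_empty_iff_false, iff_false, not_and]
  rintro ⟨hs, -, -⟩ hsum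
  have := length_le_sum hs
  omega

lemma cnt_neg {w : ℕ} {i L : ℤ} (h : L < 0) : cnt w i L = 0 := by
  rw [cnt, wset_neg h]; simp

lemma wset_zero_zero (w : ℕ) : WSet w 0 0 = {[]} := by
  ext l
  constructor
  · rintro ⟨⟨hs, -, -⟩, hsum⟩
    have hlen := length_le_sum hs
    have hl : l = [] := by
      cases l with
      | nil => rfl
      | cons a t =>
        exfalso
        simp only [List.map_cons, List.sum_cons] at hsum
        simp only [List.length_cons, List.map_cons, List.sum_cons] at hlen
        push_cast at hlen
        omega
    simp [hl]
  · rintro rfl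
    refine ⟨⟨by simp, ?_, by simp⟩, by simp⟩
    intro h hm
    rw [heights_nil] at hm
    simp at hm
    subst hm
    exact ⟨le_refl 0, Int.ofNat_nonneg w⟩

lemma cnt_zero_zero (w : ℕ) : cnt w 0 0 = 1 := by
  rw [cnt, wset_zero_zero]; simp

lemma wset_zero_ne {w : ℕ} {i : ℤ} (h : i ≠ 0) : WSet w i 0 = ∅ := by
  ext l
  simp only [WSet, Set.mem_setOf_eq, Set.mem_empty_iff_false, iff_false, not_and]
  rintro ⟨hs, -, hend⟩ hsum
  have hlen := length_le_sum hs
  have hl : l = [] := by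
    cases l with
    | nil => rfl
    | cons a t =>
      exfalso
      simp only [List.map_cons, List.sum_cons] at hsum
      simp only [List.length_cons, List.map_cons, List.sum_cons] at hlen
      push_cast at hlen
      omega
  subst hl
  simp at hend
  exact h hend

lemma cnt_zero_ne {w : ℕ} {i : ℤ} (h : i ≠ 0) : cnt w i 0 = 0 := by
  rw [cnt, wset_zero_ne h]; simp

lemma disj_cons {a b : Step} (h : a ≠ b) (s t : Set (List Step)) :
    Disjoint ((a :: ·) '' s) ((b :: ·) '' t) := by
  rw [Set.disjoint_left]
  rintro l ⟨x, -, rfl⟩ ⟨y, -, hy⟩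
  exact h (by injection hy.symm with h1 h2)

lemma wset_decomp {w : ℕ} {i L : ℤ} (hi : 0 ≤ i ∧ i ≤ (w : ℤ)) (hL : 1 ≤ L) :
    WSet w i L = ((((1,1) : Step) :: ·) '' WSet w (i+1) (L-1)
      ∪ (((1,-1) : Step) :: ·) '' WSet w (i-1) (L-1))
      ∪ ((((2,2) : Step) :: ·) '' WSet w (i+2) (L-2)
      ∪ (((2,-2) : Step) :: ·) '' WSet w (i-2) (L-2)) := by
  ext l
  constructor
  · rintro ⟨hw, hsum⟩
    cases l with
    | nil =>
      exfalso
      simp at hsum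
      omega
    | cons st l' =>
      rcases isWalk_cons.1 hw with ⟨hst, -, hw'⟩
      simp only [List.map_cons, List.sum_cons] at hsum
      rcases mem_bball.1 hst with rfl | rfl | rfl | rfl
      · exact Or.inl (Or.inl ⟨l', ⟨hw', by omega⟩, rfl⟩)
      · exact Or.inl (Or.inr ⟨l', ⟨by simpa [sub_eq_add_neg] using hw', by omega⟩, rfl⟩)
      · exact Or.inr (Or.inl ⟨l', ⟨hw', by omega⟩, rfl⟩)
      · exact Or.inr (Or.inr ⟨l', ⟨by simpa [sub_eq_add_neg] using hw', by omega⟩, rfl⟩)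
  · rintro ((⟨l', ⟨hw', hsum'⟩, rfl⟩ | ⟨l', ⟨hw', hsum'⟩, rfl⟩) |
        (⟨l', ⟨hw', hsum'⟩, rfl⟩ | ⟨l', ⟨hw', hsum'⟩, rfl⟩)) <;>
      refine ⟨isWalk_cons.2 ⟨by simp [mem_bball], hi, ?_⟩, ?_⟩ <;>
      simp only [List.map_cons, List.sum_cons] <;>
      first
        | exact hw'
        | (rw [(by ring : i + (-1 : ℤ) = i - 1)]; exact hw')
        | (rw [(by ring : i + (-2 : ℤ) = i - 2)]; exact hw')
        | (rw [hsum']; ring)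

lemma cnt_rec {w : ℕ} {i L : ℤ} (hi : 0 ≤ i ∧ i ≤ (w : ℤ)) (hL : 1 ≤ L) :
    cnt w i L = cnt w (i+1) (L-1) + cnt w (i-1) (L-1) + cnt w (i+2) (L-2) + cnt w (i-2) (L-2) := by
  have fin : ∀ (j M : ℤ) (st : Step), ((st :: ·) '' WSet w j M).Finite :=
    fun j M st => (wset_finite w j M).image _
  have inj : ∀ st : Step, Function.Injective (st :: ·) := fun st a b h => by injection h
  rw [cnt, wset_decomp hi hL]
  rw [Set.ncard_union_eq ?d1 (Set.Finite.union (fin _ _ _) (fin _ _ _))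
      (Set.Finite.union (fin _ _ _) (fin _ _ _)),
    Set.ncard_union_eq ?d2 (fin _ _ _) (fin _ _ _),
    Set.ncard_union_eq ?d3 (fin _ _ _) (fin _ _ _)]
  case d1 =>
    apply Disjoint.union_left <;> apply Disjoint.union_right <;>
      exact disj_cons (by decide) _ _
  case d2 => exact disj_cons (by decide) _ _
  case d3 => exact disj_cons (by decide) _ _
  rw [Set.ncard_image_of_injective _ (inj _), Set.ncard_image_of_injective _ (inj _),
    Set.ncard_image_of_injective _ (inj _), Set.ncard_image_of_injective _ (inj _)]
  simp only [cnt]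
  omega

noncomputable def Wps (w : ℕ) (i : ℤ) : PowerSeries ℚ :=
  PowerSeries.mk fun n => (cnt w i (n : ℤ) : ℚ)

lemma Wps_out {w : ℕ} {i : ℤ} (h : i < 0 ∨ (w : ℤ) < i) : Wps w i = 0 := by
  ext n
  simp [Wps, cnt_out h]

lemma cnt_rec' {w : ℕ} {i : ℤ} (hi : 0 ≤ i ∧ i ≤ (w : ℤ)) (n : ℕ) :
    (cnt w i ((n : ℤ) + 1) : ℚ) = (cnt w (i+1) (n : ℤ) : ℚ) + (cnt w (i-1) (n : ℤ) : ℚ)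
      + (cnt w (i+2) ((n : ℤ) - 1) : ℚ) + (cnt w (i-2) ((n : ℤ) - 1) : ℚ) := by
  have h := cnt_rec (w := w) (i := i) (L := (n : ℤ) + 1) hi (by omega)
  rw [show (n : ℤ) + 1 - 1 = (n : ℤ) by ring, show (n : ℤ) + 1 - 2 = (n : ℤ) - 1 by ring] at h
  exact_mod_cast congrArg (fun k : ℕ => (k : ℚ)) h

lemma row_eq {w : ℕ} {i : ℤ} (hi : 0 ≤ i ∧ i ≤ (w : ℤ)) :
    Wps w i = (if i = 0 then 1 else 0)
      + X * (Wps w (i+1) + Wps w (i-1)) + X ^ 2 * (Wps w (i+2) + Wps w (i-2)) := by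
  have hX2 : ∀ f : PowerSeries ℚ, X ^ 2 * f = X * (X * f) := fun f => by ring
  ext n
  rw [map_add, map_add]
  cases n with
  | zero =>
    rw [hX2, PowerSeries.coeff_zero_X_mul, PowerSeries.coeff_zero_X_mul]
    simp only [Wps, PowerSeries.coeff_mk, add_zero, Nat.cast_zero]
    by_cases h : i = 0
    · subst h
      rw [if_pos rfl, cnt_zero_zero]
      simp
    · rw [if_neg h, cnt_zero_ne h]
      simp
  | succ n =>
    rw [PowerSeries.coeff_succ_X_mul, hX2, PowerSeries.coeff_succ_X_mul]
    have hconst : (PowerSeries.coeff (n+1)) (if i = 0 then (1 : PowerSeries ℚ) else 0) = 0 := by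
      split <;> simp [PowerSeries.coeff_one]
    rw [hconst, zero_add, map_add]
    simp only [Wps, PowerSeries.coeff_mk]
    have hrec := cnt_rec' hi n
    push_cast at hrec
    cases n with
    | zero =>
      rw [PowerSeries.coeff_zero_X_mul]
      simp only [Nat.cast_zero] at hrec ⊢
      rw [show ((0:ℤ) - 1) = -1 by ring] at hrec
      rw [cnt_neg (by norm_num : (-1 : ℤ) < 0), cnt_neg (by norm_num : (-1 : ℤ) < 0)] at hrec
      push_cast at hrec ⊢
      linarith [hrec]
    | succ m =>
      rw [PowerSeries.coeff_succ_X_mul, map_add]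
      simp only [Wps, PowerSeries.coeff_mk]
      have h1 : ((m : ℤ) + 1) - 1 = (m : ℤ) := by ring
      push_cast
      push_cast [h1] at hrec
      linarith [hrec]

noncomputable def ff (k : ℤ) : Polynomial ℚ :=
  if k = 0 then 1 else if k = 1 ∨ k = -1 then -Polynomial.X
  else if k = 2 ∨ k = -2 then -Polynomial.X ^ 2 else 0

lemma ff_sub_comm (a b : ℤ) : ff (a - b) = ff (b - a) := by
  unfold ff
  split_ifs <;> first | rfl | omega

lemma ff_big {k : ℤ} (h : 3 ≤ k ∨ k ≤ -3) : ff k = 0 := by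
  unfold ff
  split_ifs <;> first | rfl | omega

noncomputable def matL (s : ℕ) (r c : ℕ → ℤ) : Matrix (Fin s) (Fin s) (Polynomial ℚ) :=
  Matrix.of fun i j => ff (r i.val - c j.val)

lemma matL_congr {s : ℕ} {r c r' c' : ℕ → ℤ}
    (h : ∀ i < s, ∀ j < s, r i - c j = r' i - c' j) : matL s r c = matL s r' c' := by
  ext i j
  simp only [matL, Matrix.of_apply]
  rw [h i.val i.isLt j.val j.isLt]

lemma matL_transpose (s : ℕ) (r c : ℕ → ℤ) : (matL s r c).transpose = matL s c r := by
  apply Matrix.ext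
  intro i j
  simp only [matL, Matrix.transpose_apply, Matrix.of_apply]
  exact ff_sub_comm _ _

lemma det_matL_comm (s : ℕ) (r c : ℕ → ℤ) : (matL s r c).det = (matL s c r).det := by
  rw [← Matrix.det_transpose, matL_transpose]

lemma sum_fin_three {M : Type*} [AddCommMonoid M] {s : ℕ} (hs : 3 ≤ s) (g : Fin s → M)
    (h : ∀ j : Fin s, 3 ≤ (j : ℕ) → g j = 0) :
    ∑ j, g j = g ⟨0, by omega⟩ + g ⟨1, by omega⟩ + g ⟨2, by omega⟩ := by
  have key : ∑ j, g j
      = ∑ j ∈ ({⟨0, by omega⟩, ⟨1, by omega⟩, ⟨2, by omega⟩} : Finset (Fin s)), g j := by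
    symm
    apply Finset.sum_subset (Finset.subset_univ _)
    intro x _ hx
    apply h
    simp only [Finset.mem_insert, Finset.mem_singleton, Fin.ext_iff] at hx
    omega
  rw [key]
  rw [Finset.sum_insert (by simp [Fin.ext_iff]), Finset.sum_insert (by simp [Fin.ext_iff]),
    Finset.sum_singleton, add_assoc]

lemma val_succAbove {n : ℕ} (p : Fin (n+1)) (j : Fin n) :
    ((p.succAbove j : Fin (n+1)) : ℕ) = if (j : ℕ) < (p : ℕ) then (j : ℕ) else (j : ℕ) + 1 := by
  rw [Fin.succAbove]
  split_ifs with h1 h2 h2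
  · simp
  · exact absurd (by simpa [Fin.lt_def] using h1) h2
  · exact absurd (by simpa [Fin.lt_def] using h2) h1
  · simp

lemma det_expand (s : ℕ) (hs : 2 ≤ s) (r c : ℕ → ℤ)
    (h3 : ∀ j : ℕ, 3 ≤ j → j ≤ s → ff (r 0 - c j) = 0) :
    (matL (s+1) r c).det
      = ff (r 0 - c 0) * (matL s (fun k => r (k+1)) (fun k => c (k+1))).det
      - ff (r 0 - c 1) * (matL s (fun k => r (k+1)) (fun j => c (if j = 0 then 0 else j+1))).det
      + ff (r 0 - c 2) * (matL s (fun k => r (k+1)) (fun j => c (if j ≤ 1 then j else j+1))).det := by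
  have hsub : ∀ p : Fin (s+1), (matL (s+1) r c).submatrix Fin.succ p.succAbove
      = matL s (fun k => r (k+1)) (fun j => c (if j < (p : ℕ) then j else j+1)) := by
    intro p
    ext i j
    simp only [matL, Matrix.submatrix_apply, Matrix.of_apply, Fin.val_succ]
    rw [val_succAbove]
  rw [Matrix.det_succ_row_zero]
  rw [sum_fin_three (by omega) _ ?hz]
  case hz =>
    intro j hj
    have : (matL (s+1) r c) 0 j = 0 := h3 j.val hj (by omega)
    rw [this]
    ring
  have e0 : ((⟨0, by omega⟩ : Fin (s+1)) : ℕ) = 0 := rfl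
  have e1 : ((⟨1, by omega⟩ : Fin (s+1)) : ℕ) = 1 := rfl
  have e2 : ((⟨2, by omega⟩ : Fin (s+1)) : ℕ) = 2 := rfl
  rw [hsub, hsub, hsub]
  simp only [e0, e1, e2, pow_zero, pow_one, pow_succ]
  have m0 : matL s (fun k => r (k+1)) (fun j => c (if j < 0 then j else j+1))
      = matL s (fun k => r (k+1)) (fun k => c (k+1)) := by
    apply matL_congr; intro i hi j hj
    have h : (if j < 0 then j else j + 1) = j + 1 := by simp
    rw [h]
  have m1 : matL s (fun k => r (k+1)) (fun j => c (if j < 1 then j else j+1))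
      = matL s (fun k => r (k+1)) (fun j => c (if j = 0 then 0 else j+1)) := by
    apply matL_congr; intro i hi j hj
    have h : (if j < 1 then j else j + 1) = (if j = 0 then 0 else j + 1) := by
      split_ifs <;> omega
    rw [h]
  have m2 : matL s (fun k => r (k+1)) (fun j => c (if j < 2 then j else j+1))
      = matL s (fun k => r (k+1)) (fun j => c (if j ≤ 1 then j else j+1)) := by
    apply matL_congr; intro i hi j hj
    have h : (if j < 2 then j else j + 1) = (if j ≤ 1 then j else j + 1) := by
      split_ifs <;> omega
    rw [h]
  rw [m0, m1, m2]
  have a0 : matL (s+1) r c 0 ⟨0, by omega⟩ = ff (r 0 - c 0) := rfl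
  have a1 : matL (s+1) r c 0 ⟨1, by omega⟩ = ff (r 0 - c 1) := rfl
  have a2 : matL (s+1) r c 0 ⟨2, by omega⟩ = ff (r 0 - c 2) := rfl
  rw [a0, a1, a2]
  ring

noncomputable def Dd (s : ℕ) : Polynomial ℚ :=
  (matL s (fun k => (k : ℤ)) (fun k => (k : ℤ))).det

noncomputable def Aa (s : ℕ) : Polynomial ℚ :=
  (matL s (fun k => (k : ℤ) + 1) (fun j => if j = 0 then 0 else (j : ℤ) + 1)).det

noncomputable def Bb (s : ℕ) : Polynomial ℚ :=
  (matL s (fun k => (k : ℤ) + 1) (fun j => if j ≤ 1 then (j : ℤ) else (j : ℤ) + 1)).det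

noncomputable def Cc (s : ℕ) : Polynomial ℚ :=
  (matL s (fun i => if i = 0 then 1 else (i : ℤ) + 2) (fun j => (j : ℤ) + 2)).det

noncomputable def Ee (s : ℕ) : Polynomial ℚ :=
  (matL s (fun i => if i = 0 then 1 else (i : ℤ) + 2) (fun j => if j = 0 then 1 else (j : ℤ) + 2)).det

lemma det_expand_col (s : ℕ) (hs : 2 ≤ s) (r c : ℕ → ℤ)
    (h3 : ∀ i : ℕ, 3 ≤ i → i ≤ s → ff (r i - c 0) = 0) :
    (matL (s+1) r c).det
      = ff (r 0 - c 0) * (matL s (fun k => r (k+1)) (fun k => c (k+1))).det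
      - ff (r 1 - c 0) * (matL s (fun i => r (if i = 0 then 0 else i+1)) (fun k => c (k+1))).det
      + ff (r 2 - c 0) * (matL s (fun i => r (if i ≤ 1 then i else i+1)) (fun k => c (k+1))).det := by
  rw [det_matL_comm, det_expand s hs c r (fun i h3' hle => by
    rw [ff_sub_comm]; exact h3 i h3' hle)]
  rw [ff_sub_comm (c 0) (r 0), ff_sub_comm (c 0) (r 1), ff_sub_comm (c 0) (r 2)]
  rw [det_matL_comm s (fun k => c (k+1)) (fun k => r (k+1)),
    det_matL_comm s (fun k => c (k+1)) (fun j => r (if j = 0 then 0 else j+1)),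
    det_matL_comm s (fun k => c (k+1)) (fun j => r (if j ≤ 1 then j else j+1))]

lemma det_expand' (s : ℕ) (hs : 2 ≤ s) (r c r0' c0' r1' c1' r2' c2' : ℕ → ℤ)
    (v0 v1 v2 : Polynomial ℚ)
    (hf0 : ff (r 0 - c 0) = v0) (hf1 : ff (r 0 - c 1) = v1) (hf2 : ff (r 0 - c 2) = v2)
    (h0 : ∀ i < s, ∀ j < s, r (i+1) - c (j+1) = r0' i - c0' j)
    (h1 : ∀ i < s, ∀ j < s, r (i+1) - c (if j = 0 then 0 else j+1) = r1' i - c1' j)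
    (h2 : ∀ i < s, ∀ j < s, r (i+1) - c (if j ≤ 1 then j else j+1) = r2' i - c2' j)
    (h3 : ∀ j : ℕ, 3 ≤ j → j ≤ s → ff (r 0 - c j) = 0) :
    (matL (s+1) r c).det
      = v0 * (matL s r0' c0').det - v1 * (matL s r1' c1').det + v2 * (matL s r2' c2').det := by
  rw [det_expand s hs r c h3, hf0, hf1, hf2,
    matL_congr h0, matL_congr h1, matL_congr h2]

lemma det_expand_col' (s : ℕ) (hs : 2 ≤ s) (r c r0' c0' r1' c1' r2' c2' : ℕ → ℤ)
    (v0 v1 v2 : Polynomial ℚ)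
    (hf0 : ff (r 0 - c 0) = v0) (hf1 : ff (r 1 - c 0) = v1) (hf2 : ff (r 2 - c 0) = v2)
    (h0 : ∀ i < s, ∀ j < s, r (i+1) - c (j+1) = r0' i - c0' j)
    (h1 : ∀ i < s, ∀ j < s, r (if i = 0 then 0 else i+1) - c (j+1) = r1' i - c1' j)
    (h2 : ∀ i < s, ∀ j < s, r (if i ≤ 1 then i else i+1) - c (j+1) = r2' i - c2' j)
    (h3 : ∀ i : ℕ, 3 ≤ i → i ≤ s → ff (r i - c 0) = 0) :
    (matL (s+1) r c).det
      = v0 * (matL s r0' c0').det - v1 * (matL s r1' c1').det + v2 * (matL s r2' c2').det := by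
  rw [det_expand_col s hs r c h3, hf0, hf1, hf2,
    matL_congr h0, matL_congr h1, matL_congr h2]

lemma ff0 : ff 0 = 1 := by norm_num [ff]
lemma ff1 : ff 1 = -Polynomial.X := by norm_num [ff]
lemma ffm1 : ff (-1) = -Polynomial.X := by norm_num [ff]
lemma ff2 : ff 2 = -Polynomial.X ^ 2 := by norm_num [ff]
lemma ffm2 : ff (-2) = -Polynomial.X ^ 2 := by norm_num [ff]

lemma L1 {s : ℕ} (hs : 2 ≤ s) :
    Dd (s+1) = Dd s + Polynomial.X * Aa s - Polynomial.X ^ 2 * Bb s := by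
  rw [Dd, det_expand' s hs _ _
      (fun k => (k : ℤ)) (fun k => (k : ℤ))
      (fun k => (k : ℤ) + 1) (fun j => if j = 0 then 0 else (j : ℤ) + 1)
      (fun k => (k : ℤ) + 1) (fun j => if j ≤ 1 then (j : ℤ) else (j : ℤ) + 1)
      1 (-Polynomial.X) (-Polynomial.X ^ 2)
      (by norm_num [ff]) (by norm_num [ff]) (by norm_num [ff])
      (fun i hi j hj => by push_cast; first | omega | (split_ifs <;> omega))
      (fun i hi j hj => by push_cast; first | omega | (split_ifs <;> omega))
      (fun i hi j hj => by push_cast; first | omega | (split_ifs <;> omega))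
      (fun j h3 hle => ff_big (by push_cast; first | omega | (split_ifs <;> omega)))]
  rw [← Dd, ← Aa, ← Bb]
  ring

lemma L2 {s : ℕ} (hs : 2 ≤ s) :
    Aa (s+1) = -Polynomial.X * Dd s + Polynomial.X ^ 2 * Cc s := by
  rw [Aa, det_expand_col' s hs _ _
      (fun k => (k : ℤ)) (fun k => (k : ℤ))
      (fun i => if i = 0 then 1 else (i : ℤ) + 2) (fun j => (j : ℤ) + 2)
      (fun i => ((if i ≤ 1 then i else i+1 : ℕ) : ℤ) + 1)
      (fun j => if (j+1 : ℕ) = 0 then 0 else ((j+1 : ℕ) : ℤ) + 1)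
      (-Polynomial.X) (-Polynomial.X ^ 2) 0
      (by norm_num [ff]) (by norm_num [ff]) (by norm_num [ff])
      (fun i hi j hj => by push_cast; first | omega | (split_ifs <;> omega))
      (fun i hi j hj => by push_cast; first | omega | (split_ifs <;> omega))
      (fun i hi j hj => rfl)
      (fun i h3 hle => ff_big (by push_cast; first | omega | (split_ifs <;> omega)))]
  rw [← Dd, ← Cc]
  ring

lemma L3 {s : ℕ} (hs : 2 ≤ s) :
    Cc (s+1) = -Polynomial.X * Dd s + Polynomial.X ^ 2 * Aa s := by
  rw [Cc, det_expand' s hs _ _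
      (fun k => (k : ℤ)) (fun k => (k : ℤ))
      (fun k => (k : ℤ) + 1) (fun j => if j = 0 then 0 else (j : ℤ) + 1)
      (fun i => if (i+1 : ℕ) = 0 then 1 else ((i+1 : ℕ) : ℤ) + 2)
      (fun j => ((if j ≤ 1 then j else j+1 : ℕ) : ℤ) + 2)
      (-Polynomial.X) (-Polynomial.X ^ 2) 0
      (by norm_num [ff]) (by norm_num [ff]) (by norm_num [ff])
      (fun i hi j hj => by push_cast; first | omega | (split_ifs <;> omega))
      (fun i hi j hj => by push_cast; first | omega | (split_ifs <;> omega))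
      (fun i hi j hj => rfl)
      (fun j h3 hle => ff_big (by push_cast; first | omega | (split_ifs <;> omega)))]
  rw [← Dd, ← Aa]
  ring

lemma L4 {s : ℕ} (hs : 2 ≤ s) :
    Bb (s+1) = -Polynomial.X * Aa s + Polynomial.X ^ 2 * Ee s := by
  rw [Bb, det_expand_col' s hs _ _
      (fun k => (k : ℤ) + 1) (fun j => if j = 0 then 0 else (j : ℤ) + 1)
      (fun i => if i = 0 then 1 else (i : ℤ) + 2) (fun j => if j = 0 then 1 else (j : ℤ) + 2)
      (fun i => ((if i ≤ 1 then i else i+1 : ℕ) : ℤ) + 1)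
      (fun j => if (j+1 : ℕ) ≤ 1 then ((j+1 : ℕ) : ℤ) else ((j+1 : ℕ) : ℤ) + 1)
      (-Polynomial.X) (-Polynomial.X ^ 2) 0
      (by norm_num [ff]) (by norm_num [ff]) (by norm_num [ff])
      (fun i hi j hj => by push_cast; first | omega | (split_ifs <;> omega))
      (fun i hi j hj => by push_cast; first | omega | (split_ifs <;> omega))
      (fun i hi j hj => rfl)
      (fun i h3 hle => ff_big (by push_cast; first | omega | (split_ifs <;> omega)))]
  rw [← Aa, ← Ee]
  ring

lemma L5 {s : ℕ} (hs : 3 ≤ s) :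
    Ee (s+1) = Dd s - Polynomial.X ^ 4 * Dd (s-1) := by
  obtain ⟨t, rfl⟩ : ∃ t, s = t + 3 := ⟨s - 3, by omega⟩
  have inner : (matL (t+3) (fun i => (i : ℤ) + 3) (fun j => if j = 0 then 1 else (j : ℤ) + 3)).det
      = (-Polynomial.X ^ 2) * Dd (t+2)
        - 0 * (matL (t+2) (fun i => (((if i = 0 then 0 else i+1 : ℕ)) : ℤ) + 3)
            (fun j => if (j+1 : ℕ) = 0 then 1 else ((j+1 : ℕ) : ℤ) + 3)).det
        + 0 * (matL (t+2) (fun i => (((if i ≤ 1 then i else i+1 : ℕ)) : ℤ) + 3)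
            (fun j => if (j+1 : ℕ) = 0 then 1 else ((j+1 : ℕ) : ℤ) + 3)).det := by
    rw [det_expand_col' (t+2) (by omega) _ _
        (fun k => (k : ℤ)) (fun k => (k : ℤ))
        (fun i => (((if i = 0 then 0 else i+1 : ℕ)) : ℤ) + 3)
        (fun j => if (j+1 : ℕ) = 0 then 1 else ((j+1 : ℕ) : ℤ) + 3)
        (fun i => (((if i ≤ 1 then i else i+1 : ℕ)) : ℤ) + 3)
        (fun j => if (j+1 : ℕ) = 0 then 1 else ((j+1 : ℕ) : ℤ) + 3)
        (-Polynomial.X ^ 2) 0 0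
        (by norm_num [ff]) (by norm_num [ff]) (by norm_num [ff])
        (fun i hi j hj => by push_cast; first | omega | (split_ifs <;> omega))
        (fun i hi j hj => rfl)
        (fun i hi j hj => rfl)
        (fun i h3 hle => ff_big (by push_cast; first | omega | (split_ifs <;> omega)))]
    rw [← Dd]
  rw [Ee, det_expand' (t+3) (by omega) _ _
      (fun k => (k : ℤ)) (fun k => (k : ℤ))
      (fun i => (i : ℤ) + 3) (fun j => if j = 0 then 1 else (j : ℤ) + 3)
      (fun i => if (i+1 : ℕ) = 0 then 1 else ((i+1 : ℕ) : ℤ) + 2)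
      (fun j => if (if j ≤ 1 then j else j+1 : ℕ) = 0 then 1 else ((if j ≤ 1 then j else j+1 : ℕ) : ℤ) + 2)
      1 (-Polynomial.X ^ 2) 0
      (by norm_num [ff]) (by norm_num [ff]) (by norm_num [ff])
      (fun i hi j hj => by push_cast; first | omega | (split_ifs <;> omega))
      (fun i hi j hj => by
        rcases Nat.eq_zero_or_pos j with rfl | hj1
        · norm_num; omega
        · have e1 : (if j = 0 then 0 else j+1) = j+1 := if_neg (by omega)
          rw [e1]; push_cast; split_ifs <;> omega)
      (fun i hi j hj => rfl)
      (fun j h3 hle => ff_big (by push_cast; first | omega | (split_ifs <;> omega)))]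
  rw [← Dd, inner]
  have h32 : t + 3 - 1 = t + 2 := by omega
  rw [h32]
  ring

lemma L1' (u : ℕ) : Dd (u+3) = Dd (u+2) + Polynomial.X * Aa (u+2) - Polynomial.X ^ 2 * Bb (u+2) :=
  L1 (by omega)

lemma L2' (u : ℕ) : Aa (u+3) = -Polynomial.X * Dd (u+2) + Polynomial.X ^ 2 * Cc (u+2) :=
  L2 (by omega)

lemma L3' (u : ℕ) : Cc (u+3) = -Polynomial.X * Dd (u+2) + Polynomial.X ^ 2 * Aa (u+2) :=
  L3 (by omega)

lemma L4' (u : ℕ) : Bb (u+3) = -Polynomial.X * Aa (u+2) + Polynomial.X ^ 2 * Ee (u+2) :=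
  L4 (by omega)

lemma L5' (u : ℕ) : Ee (u+4) = Dd (u+3) - Polynomial.X ^ 4 * Dd (u+2) :=
  L5 (by omega)

lemma dag (u : ℕ) : Dd (u+6) = Dd (u+5) + Polynomial.X * Aa (u+5) + Polynomial.X ^ 3 * Aa (u+4)
    - Polynomial.X ^ 4 * Dd (u+3) + Polynomial.X ^ 8 * Dd (u+2) := by
  have k1 : Dd (u+6) = Dd (u+5) + Polynomial.X * Aa (u+5) - Polynomial.X ^ 2 * Bb (u+5) := L1' (u+3)
  have k4 : Bb (u+5) = -Polynomial.X * Aa (u+4) + Polynomial.X ^ 2 * Ee (u+4) := L4' (u+2)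
  have k5 : Ee (u+4) = Dd (u+3) - Polynomial.X ^ 4 * Dd (u+2) := L5' u
  linear_combination k1 - Polynomial.X ^ 2 * k4 - Polynomial.X ^ 4 * k5

lemma arec (u : ℕ) : Aa (u+5) = -Polynomial.X * Dd (u+4) - Polynomial.X ^ 3 * Dd (u+3)
    + Polynomial.X ^ 4 * Aa (u+3) := by
  have k2 : Aa (u+5) = -Polynomial.X * Dd (u+4) + Polynomial.X ^ 2 * Cc (u+4) := L2' (u+2)
  have k3 : Cc (u+4) = -Polynomial.X * Dd (u+3) + Polynomial.X ^ 2 * Aa (u+3) := L3' (u+1)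
  linear_combination k2 + Polynomial.X ^ 2 * k3

lemma order6 (t : ℕ) : Dd (t+8) = Dd (t+7)
    - (Polynomial.X ^ 2 - Polynomial.X ^ 4) * Dd (t+6)
    - 4 * Polynomial.X ^ 4 * Dd (t+5)
    - (Polynomial.X ^ 6 - Polynomial.X ^ 8) * Dd (t+4)
    + Polynomial.X ^ 8 * Dd (t+3)
    - Polynomial.X ^ 12 * Dd (t+2) := by
  have d2 : Dd (t+8) = Dd (t+7) + Polynomial.X * Aa (t+7) + Polynomial.X ^ 3 * Aa (t+6)
      - Polynomial.X ^ 4 * Dd (t+5) + Polynomial.X ^ 8 * Dd (t+4) := dag (t+2)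
  have d0 : Dd (t+6) = Dd (t+5) + Polynomial.X * Aa (t+5) + Polynomial.X ^ 3 * Aa (t+4)
      - Polynomial.X ^ 4 * Dd (t+3) + Polynomial.X ^ 8 * Dd (t+2) := dag t
  have a3 : Aa (t+7) = -Polynomial.X * Dd (t+6) - Polynomial.X ^ 3 * Dd (t+5)
      + Polynomial.X ^ 4 * Aa (t+5) := arec (t+2)
  have a2 : Aa (t+6) = -Polynomial.X * Dd (t+5) - Polynomial.X ^ 3 * Dd (t+4)
      + Polynomial.X ^ 4 * Aa (t+4) := arec (t+1)
  linear_combination d2 - Polynomial.X ^ 4 * d0 + Polynomial.X * a3 + Polynomial.X ^ 3 * a2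

noncomputable def qc (m : ℕ) : Polynomial ℚ := (Q m).comp (Polynomial.X ^ 2)

lemma vD1 : Dd 1 = 1 := by
  rw [Dd, Matrix.det_fin_one]
  norm_num [matL, ff]

lemma vD2 : Dd 2 = 1 - Polynomial.X ^ 2 := by
  rw [Dd, Matrix.det_fin_two]
  norm_num [matL, ff]
  ring

lemma vA2 : Aa 2 = -Polynomial.X - Polynomial.X ^ 3 := by
  rw [Aa, Matrix.det_fin_two]
  norm_num [matL, ff]
  ring

lemma vB2 : Bb 2 = 2 * Polynomial.X ^ 2 := by
  rw [Bb, Matrix.det_fin_two]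
  norm_num [matL, ff]
  ring

lemma vC2 : Cc 2 = -Polynomial.X - Polynomial.X ^ 3 := by
  rw [Cc, Matrix.det_fin_two]
  norm_num [matL, ff]
  ring

lemma vE2 : Ee 2 = 1 - Polynomial.X ^ 4 := by
  rw [Ee, Matrix.det_fin_two]
  norm_num [matL, ff]
  ring

lemma vE3 : Ee 3 = 1 - Polynomial.X ^ 2 - Polynomial.X ^ 4 := by
  rw [Ee, Matrix.det_fin_three]
  simp [matL, ff]
  ring

lemma vD3 : Dd 3 = 1 - 2 * Polynomial.X ^ 2 - 3 * Polynomial.X ^ 4 := by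
  have h : Dd 3 = Dd 2 + Polynomial.X * Aa 2 - Polynomial.X ^ 2 * Bb 2 := L1' 0
  rw [h, vD2, vA2, vB2]; ring

lemma vA3 : Aa 3 = -Polynomial.X - Polynomial.X ^ 5 := by
  have h : Aa 3 = -Polynomial.X * Dd 2 + Polynomial.X ^ 2 * Cc 2 := L2' 0
  rw [h, vD2, vC2]; ring

lemma vC3 : Cc 3 = -Polynomial.X - Polynomial.X ^ 5 := by
  have h : Cc 3 = -Polynomial.X * Dd 2 + Polynomial.X ^ 2 * Aa 2 := L3' 0
  rw [h, vD2, vA2]; ring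

lemma vB3 : Bb 3 = 2 * Polynomial.X ^ 2 + Polynomial.X ^ 4 - Polynomial.X ^ 6 := by
  have h : Bb 3 = -Polynomial.X * Aa 2 + Polynomial.X ^ 2 * Ee 2 := L4' 0
  rw [h, vA2, vE2]; ring

lemma vD4 : Dd 4 = 1 - 3 * Polynomial.X ^ 2 - 5 * Polynomial.X ^ 4 - 2 * Polynomial.X ^ 6
    + Polynomial.X ^ 8 := by
  have h : Dd 4 = Dd 3 + Polynomial.X * Aa 3 - Polynomial.X ^ 2 * Bb 3 := L1' 1
  rw [h, vD3, vA3, vB3]; ring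

lemma vA4 : Aa 4 = -Polynomial.X + Polynomial.X ^ 3 + 3 * Polynomial.X ^ 5 - Polynomial.X ^ 7 := by
  have h : Aa 4 = -Polynomial.X * Dd 3 + Polynomial.X ^ 2 * Cc 3 := L2' 1
  rw [h, vD3, vC3]; ring

lemma vC4 : Cc 4 = -Polynomial.X + Polynomial.X ^ 3 + 3 * Polynomial.X ^ 5 - Polynomial.X ^ 7 := by
  have h : Cc 4 = -Polynomial.X * Dd 3 + Polynomial.X ^ 2 * Aa 3 := L3' 1
  rw [h, vD3, vA3]; ring

lemma vB4 : Bb 4 = 2 * Polynomial.X ^ 2 - Polynomial.X ^ 4 := by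
  have h : Bb 4 = -Polynomial.X * Aa 3 + Polynomial.X ^ 2 * Ee 3 := L4' 1
  rw [h, vA3, vE3]; ring

lemma vE4 : Ee 4 = 1 - 2 * Polynomial.X ^ 2 - 4 * Polynomial.X ^ 4 + Polynomial.X ^ 6 := by
  have h : Ee 4 = Dd 3 - Polynomial.X ^ 4 * Dd 2 := L5' 0
  rw [h, vD3, vD2]; ring

lemma vD5 : Dd 5 = 1 - 4 * Polynomial.X ^ 2 - 6 * Polynomial.X ^ 4 + 2 * Polynomial.X ^ 6 := by
  have h : Dd 5 = Dd 4 + Polynomial.X * Aa 4 - Polynomial.X ^ 2 * Bb 4 := L1' 2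
  rw [h, vD4, vA4, vB4]; ring

lemma vA5 : Aa 5 = -Polynomial.X + 2 * Polynomial.X ^ 3 + 6 * Polynomial.X ^ 5
    + 5 * Polynomial.X ^ 7 - 2 * Polynomial.X ^ 9 := by
  have h : Aa 5 = -Polynomial.X * Dd 4 + Polynomial.X ^ 2 * Cc 4 := L2' 2
  rw [h, vD4, vC4]; ring

lemma vC5 : Cc 5 = -Polynomial.X + 2 * Polynomial.X ^ 3 + 6 * Polynomial.X ^ 5
    + 5 * Polynomial.X ^ 7 - 2 * Polynomial.X ^ 9 := by
  have h : Cc 5 = -Polynomial.X * Dd 4 + Polynomial.X ^ 2 * Aa 4 := L3' 2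
  rw [h, vD4, vA4]; ring

lemma vB5 : Bb 5 = 2 * Polynomial.X ^ 2 - 3 * Polynomial.X ^ 4 - 7 * Polynomial.X ^ 6
    + 2 * Polynomial.X ^ 8 := by
  have h : Bb 5 = -Polynomial.X * Aa 4 + Polynomial.X ^ 2 * Ee 4 := L4' 2
  rw [h, vA4, vE4]; ring

lemma vE5 : Ee 5 = 1 - 3 * Polynomial.X ^ 2 - 6 * Polynomial.X ^ 4 + 4 * Polynomial.X ^ 8 := by
  have h : Ee 5 = Dd 4 - Polynomial.X ^ 4 * Dd 3 := L5' 1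
  rw [h, vD4, vD3]; ring

set_option maxRecDepth 10000 in
lemma vD6 : Dd 6 = 1 - 5 * Polynomial.X ^ 2 - 6 * Polynomial.X ^ 4 + 11 * Polynomial.X ^ 6
    + 12 * Polynomial.X ^ 8 - 4 * Polynomial.X ^ 10 := by
  have h : Dd 6 = Dd 5 + Polynomial.X * Aa 5 - Polynomial.X ^ 2 * Bb 5 := L1' 3
  rw [h, vD5, vA5, vB5]; ring

set_option maxRecDepth 10000 in
lemma vA6 : Aa 6 = -Polynomial.X + 3 * Polynomial.X ^ 3 + 8 * Polynomial.X ^ 5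
    + 4 * Polynomial.X ^ 7 + 5 * Polynomial.X ^ 9 - 2 * Polynomial.X ^ 11 := by
  have h : Aa 6 = -Polynomial.X * Dd 5 + Polynomial.X ^ 2 * Cc 5 := L2' 3
  rw [h, vD5, vC5]; ring

set_option maxRecDepth 10000 in
lemma vB6 : Bb 6 = 2 * Polynomial.X ^ 2 - 5 * Polynomial.X ^ 4 - 12 * Polynomial.X ^ 6
    - 5 * Polynomial.X ^ 8 + 6 * Polynomial.X ^ 10 := by
  have h : Bb 6 = -Polynomial.X * Aa 5 + Polynomial.X ^ 2 * Ee 5 := L4' 3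
  rw [h, vA5, vE5]; ring

set_option maxRecDepth 10000 in
lemma vD7 : Dd 7 = 1 - 6 * Polynomial.X ^ 2 - 5 * Polynomial.X ^ 4 + 24 * Polynomial.X ^ 6
    + 28 * Polynomial.X ^ 8 + 6 * Polynomial.X ^ 10 - 8 * Polynomial.X ^ 12 := by
  have h : Dd 7 = Dd 6 + Polynomial.X * Aa 6 - Polynomial.X ^ 2 * Bb 6 := by
    rw [show (7:ℕ) = 4 + 3 from rfl, show (6:ℕ) = 4 + 2 from rfl]; exact L1' 4
  rw [h, vD6, vA6, vB6]; ring

lemma Qrec (n : ℕ) : Q (n + 5) = (1 + Polynomial.X) * Q (n + 4) - 2 * Polynomial.X * Q (n + 3)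
    - 2 * Polynomial.X ^ 2 * Q (n + 2) + (Polynomial.X ^ 3 + Polynomial.X ^ 4) * Q (n + 1)
    - Polynomial.X ^ 5 * Q n := by
  rw [Q]

lemma comp_lemmas (p q : Polynomial ℚ) : (p * q).comp (Polynomial.X ^ 2)
    = p.comp (Polynomial.X ^ 2) * q.comp (Polynomial.X ^ 2) := Polynomial.mul_comp _ _ _

lemma qc_rec (n : ℕ) : qc (n + 5) = (1 + Polynomial.X ^ 2) * qc (n + 4)
    - 2 * Polynomial.X ^ 2 * qc (n + 3) - 2 * Polynomial.X ^ 4 * qc (n + 2)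
    + (Polynomial.X ^ 6 + Polynomial.X ^ 8) * qc (n + 1) - Polynomial.X ^ 10 * qc n := by
  simp only [qc, Qrec n, Polynomial.add_comp, Polynomial.sub_comp, Polynomial.mul_comp,
    Polynomial.one_comp, Polynomial.X_comp, Polynomial.pow_comp, Polynomial.ofNat_comp]
  ring

lemma qc_rec6 (n : ℕ) : qc (n+7) = qc (n+6)
    - (Polynomial.X ^ 2 - Polynomial.X ^ 4) * qc (n+5)
    - 4 * Polynomial.X ^ 4 * qc (n+4)
    - (Polynomial.X ^ 6 - Polynomial.X ^ 8) * qc (n+3)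
    + Polynomial.X ^ 8 * qc (n+2)
    - Polynomial.X ^ 12 * qc (n+1) := by
  have c1 : qc (n+7) = (1 + Polynomial.X ^ 2) * qc (n+6)
      - 2 * Polynomial.X ^ 2 * qc (n+5) - 2 * Polynomial.X ^ 4 * qc (n+4)
      + (Polynomial.X ^ 6 + Polynomial.X ^ 8) * qc (n+3) - Polynomial.X ^ 10 * qc (n+2) :=
    qc_rec (n+2)
  have c0 : qc (n+6) = (1 + Polynomial.X ^ 2) * qc (n+5)
      - 2 * Polynomial.X ^ 2 * qc (n+4) - 2 * Polynomial.X ^ 4 * qc (n+3)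
      + (Polynomial.X ^ 6 + Polynomial.X ^ 8) * qc (n+2) - Polynomial.X ^ 10 * qc (n+1) :=
    qc_rec (n+1)
  linear_combination c1 + Polynomial.X ^ 2 * c0

lemma vq0 : qc 0 = 1 := by simp [qc, Q]

lemma vq1 : qc 1 = 1 - Polynomial.X ^ 2 := by
  simp [qc, Q, Polynomial.sub_comp]

lemma vq2 : qc 2 = 1 - 2 * Polynomial.X ^ 2 - 3 * Polynomial.X ^ 4 := by
  simp [qc, Q, Polynomial.sub_comp, Polynomial.mul_comp, Polynomial.pow_comp]
  ring

lemma vq3 : qc 3 = 1 - 3 * Polynomial.X ^ 2 - 5 * Polynomial.X ^ 4 - 2 * Polynomial.X ^ 6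
    + Polynomial.X ^ 8 := by
  simp [qc, Q, Polynomial.sub_comp, Polynomial.mul_comp, Polynomial.pow_comp, Polynomial.add_comp]
  ring

lemma vq4 : qc 4 = 1 - 4 * Polynomial.X ^ 2 - 6 * Polynomial.X ^ 4 + 2 * Polynomial.X ^ 6 := by
  simp [qc, Q, Polynomial.sub_comp, Polynomial.mul_comp, Polynomial.pow_comp, Polynomial.add_comp]
  ring

lemma vq5 : qc 5 = 1 - 5 * Polynomial.X ^ 2 - 6 * Polynomial.X ^ 4 + 11 * Polynomial.X ^ 6
    + 12 * Polynomial.X ^ 8 - 4 * Polynomial.X ^ 10 := by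
  have h : qc 5 = (1 + Polynomial.X ^ 2) * qc 4 - 2 * Polynomial.X ^ 2 * qc 3
      - 2 * Polynomial.X ^ 4 * qc 2 + (Polynomial.X ^ 6 + Polynomial.X ^ 8) * qc 1
      - Polynomial.X ^ 10 * qc 0 := qc_rec 0
  rw [h, vq0, vq1, vq2, vq3, vq4]; ring

lemma vq6 : qc 6 = 1 - 6 * Polynomial.X ^ 2 - 5 * Polynomial.X ^ 4 + 24 * Polynomial.X ^ 6
    + 28 * Polynomial.X ^ 8 + 6 * Polynomial.X ^ 10 - 8 * Polynomial.X ^ 12 := by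
  have h : qc 6 = (1 + Polynomial.X ^ 2) * qc 5 - 2 * Polynomial.X ^ 2 * qc 4
      - 2 * Polynomial.X ^ 4 * qc 3 + (Polynomial.X ^ 6 + Polynomial.X ^ 8) * qc 2
      - Polynomial.X ^ 10 * qc 1 := qc_rec 1
  rw [h, vq1, vq2, vq3, vq4, vq5]; ring

theorem dd_eq_qc (s : ℕ) : Dd (s+1) = qc s := by
  induction s using Nat.strong_induction_on with
  | _ s ih =>
    rcases Nat.lt_or_ge s 7 with hs | hs
    · interval_cases s
      · rw [vD1, vq0]
      · rw [vD2, vq1]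
      · rw [vD3, vq2]
      · rw [vD4, vq3]
      · rw [vD5, vq4]
      · rw [vD6, vq5]
      · rw [vD7, vq6]
    · obtain ⟨t, rfl⟩ : ∃ t, s = t + 7 := ⟨s - 7, by omega⟩
      have h6 : Dd (t+8) = Dd (t+7)
          - (Polynomial.X ^ 2 - Polynomial.X ^ 4) * Dd (t+6)
          - 4 * Polynomial.X ^ 4 * Dd (t+5)
          - (Polynomial.X ^ 6 - Polynomial.X ^ 8) * Dd (t+4)
          + Polynomial.X ^ 8 * Dd (t+3)
          - Polynomial.X ^ 12 * Dd (t+2) := order6 t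
      have i6 : Dd (t+7) = qc (t+6) := ih (t+6) (by omega)
      have i5 : Dd (t+6) = qc (t+5) := ih (t+5) (by omega)
      have i4 : Dd (t+5) = qc (t+4) := ih (t+4) (by omega)
      have i3 : Dd (t+4) = qc (t+3) := ih (t+3) (by omega)
      have i2 : Dd (t+3) = qc (t+2) := ih (t+2) (by omega)
      have i1 : Dd (t+2) = qc (t+1) := ih (t+1) (by omega)
      have goal : Dd (t+8) = qc (t+7) := by
        rw [h6, i6, i5, i4, i3, i2, i1, ← qc_rec6 t]
      exact goal

noncomputable def toPS : Polynomial ℚ →+* PowerSeries ℚ := Polynomial.coeToPowerSeries.ringHom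

noncomputable def Mps (w : ℕ) : Matrix (Fin (w+1)) (Fin (w+1)) (PowerSeries ℚ) :=
  (matL (w+1) (fun k => (k : ℤ)) (fun k => (k : ℤ))).map toPS

lemma sum_range_int {M : Type*} [AddCommMonoid M] (F : ℤ → M) (n : ℕ) :
    ∑ j ∈ Finset.range n, F (j : ℤ) = ∑ j ∈ Finset.Icc (0 : ℤ) ((n : ℤ) - 1), F j := by
  induction n with
  | zero => simp
  | succ m ih =>
    rw [Finset.sum_range_succ, ih]
    have hins : Finset.Icc (0 : ℤ) (((m+1 : ℕ) : ℤ) - 1)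
        = insert ((m : ℕ) : ℤ) (Finset.Icc (0 : ℤ) (((m : ℕ) : ℤ) - 1)) := by
      ext x
      simp only [Finset.mem_Icc, Finset.mem_insert]
      push_cast
      omega
    rw [hins, Finset.sum_insert (by simp)]
    exact add_comm _ _

lemma icc_five (I : ℤ) : Finset.Icc (I-2) (I+2)
    = insert (I-2) (insert (I-1) (insert I (insert (I+1) {I+2}))) := by
  ext x
  simp only [Finset.mem_Icc, Finset.mem_insert, Finset.mem_singleton]
  omega

lemma mulVec_W (w : ℕ) :
    (Mps w).mulVec (fun j : Fin (w+1) => Wps w ((j : ℕ) : ℤ))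
      = fun i : Fin (w+1) => if i = 0 then 1 else 0 := by
  funext i
  set I : ℤ := ((i : ℕ) : ℤ) with hIdef
  have hi : 0 ≤ I ∧ I ≤ (w : ℤ) := ⟨Int.ofNat_nonneg _, by
    have := i.isLt; omega⟩
  set FF : ℤ → PowerSeries ℚ := fun k => toPS (ff (I - k)) * Wps w k with hFF
  have step1 : (Mps w).mulVec (fun j : Fin (w+1) => Wps w ((j : ℕ) : ℤ)) i
      = ∑ j ∈ Finset.range (w+1), FF ((j : ℕ) : ℤ) := by
    rw [← Fin.sum_univ_eq_sum_range (fun jn : ℕ => FF (jn : ℤ)) (w+1)]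
    rw [Matrix.mulVec, dotProduct]
    apply Finset.sum_congr rfl
    intro j _
    simp [Mps, matL, Matrix.map_apply, hFF, hIdef]
  rw [step1, sum_range_int FF (w+1)]
  have e1 : ((w+1 : ℕ) : ℤ) - 1 = (w : ℤ) := by push_cast; ring
  rw [e1]
  have hsub1 : ∑ j ∈ Finset.Icc (0 : ℤ) (w : ℤ), FF j
      = ∑ j ∈ Finset.Icc (min (I-2) 0) (max (I+2) (w : ℤ)), FF j := by
    apply Finset.sum_subset
    · intro x hx
      simp only [Finset.mem_Icc] at hx ⊢
      omega
    · intro x _ hx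
      simp only [Finset.mem_Icc, not_and, not_le] at hx
      have : x < 0 ∨ (w : ℤ) < x := by omega
      rw [hFF]
      simp [Wps_out this]
  have hsub2 : ∑ j ∈ Finset.Icc (I-2) (I+2), FF j
      = ∑ j ∈ Finset.Icc (min (I-2) 0) (max (I+2) (w : ℤ)), FF j := by
    apply Finset.sum_subset
    · intro x hx
      simp only [Finset.mem_Icc] at hx ⊢
      omega
    · intro x _ hx
      simp only [Finset.mem_Icc, not_and, not_le] at hx
      rw [hFF]
      have hz : ff (I - x) = 0 := ff_big (by omega)
      simp [hz]
  rw [hsub1, ← hsub2, icc_five]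
  rw [Finset.sum_insert (by simp; try omega), Finset.sum_insert (by simp; try omega),
    Finset.sum_insert (by simp; try omega), Finset.sum_insert (by simp; try omega),
    Finset.sum_singleton]
  rw [hFF]
  simp only []
  rw [show I - (I-2) = 2 by ring, show I - (I-1) = 1 by ring, show I - I = 0 by ring,
    show I - (I+1) = -1 by ring, show I - (I+2) = -2 by ring]
  rw [ff0, ff1, ffm1, ff2, ffm2]
  have hrow := row_eq (w := w) (i := I) hi
  have hcoe1 : toPS (1 : Polynomial ℚ) = 1 := map_one _
  have hcoeX : toPS (-Polynomial.X) = -X := by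
    rw [map_neg]
    congr 1
    exact Polynomial.coe_X
  have hcoeX2 : toPS (-Polynomial.X ^ 2) = -X^2 := by
    rw [map_neg, map_pow]
    congr 2
    exact Polynomial.coe_X
  rw [hcoe1, hcoeX, hcoeX2]
  have hif : (if i = (0 : Fin (w+1)) then (1 : PowerSeries ℚ) else 0)
      = (if I = 0 then 1 else 0) := by
    have : (i = (0 : Fin (w+1))) ↔ (I = 0) := by
      rw [Fin.ext_iff, hIdef]
      simp only [Fin.val_zero]
      omega
    by_cases h : i = 0
    · rw [if_pos h, if_pos (this.1 h)]
    · rw [if_neg h, if_neg (fun hh => h (this.2 hh))]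
  rw [hif]
  linear_combination hrow

lemma det_Mps (w : ℕ) : (Mps w).det = toPS (Dd (w+1)) := by
  rw [Mps, ← RingHom.mapMatrix_apply, ← RingHom.map_det, Dd]

lemma adj00 (w : ℕ) : (Mps w).adjugate 0 0 = toPS (Dd w) := by
  rw [Matrix.adjugate_apply, Matrix.det_succ_row_zero]
  rw [Finset.sum_eq_single 0 ?h1 ?h2]
  case h1 =>
    intro j _ hj
    rw [Matrix.updateRow_self]
    rw [Pi.single_apply, if_neg (by simpa [eq_comm] using hj)]
    ring
  case h2 => intro h; exact absurd (Finset.mem_univ _) h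
  rw [Matrix.updateRow_self]
  rw [Pi.single_apply, if_pos rfl]
  have hsub : ((Mps w).updateRow 0 (Pi.single 0 1)).submatrix Fin.succ ((0 : Fin (w+1)).succAbove)
      = ((matL w (fun k => (k : ℤ) + 1) (fun k => (k : ℤ) + 1)).map toPS) := by
    apply Matrix.ext
    intro a b
    rw [Matrix.submatrix_apply, Matrix.updateRow_ne (Fin.succ_ne_zero a)]
    simp only [Fin.zero_succAbove, Mps, Matrix.map_apply, matL, Matrix.of_apply, Fin.val_succ]
    push_cast
    ring_nf
  rw [hsub, ← RingHom.mapMatrix_apply, ← RingHom.map_det]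
  have : (matL w (fun k => (k : ℤ) + 1) (fun k => (k : ℤ) + 1)).det = Dd w := by
    rw [Dd]
    congr 1
    apply matL_congr
    intro a ha b hb
    ring
  rw [this]
  simp [pow_zero]

lemma main_ps (w : ℕ) : toPS (Dd (w+1)) * Wps w 0 = toPS (Dd w) := by
  have hmv := mulVec_W w
  have h1 : (Mps w).adjugate.mulVec ((Mps w).mulVec (fun j : Fin (w+1) => Wps w ((j : ℕ) : ℤ)))
      = (Mps w).adjugate.mulVec (fun i : Fin (w+1) => if i = 0 then 1 else 0) := by
    rw [hmv]
  rw [Matrix.mulVec_mulVec, Matrix.adjugate_mul, Matrix.smul_mulVec, Matrix.one_mulVec]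
    at h1
  have h2 := congrFun h1 0
  have e0 : (fun i : Fin (w+1) => if i = 0 then (1 : PowerSeries ℚ) else 0) = Pi.single 0 1 := by
    funext i
    rw [Pi.single_apply]
  rw [e0] at h2
  have h3 : ((Mps w).adjugate.mulVec (Pi.single 0 1)) 0 = (Mps w).adjugate 0 0 := by
    rw [Matrix.mulVec_single]
    exact mul_one _
  rw [h3, adj00] at h2
  have h4 : ((Mps w).det • (fun j : Fin (w+1) => Wps w ((j : ℕ) : ℤ))) 0
      = (Mps w).det * Wps w 0 := by
    simp
  rw [h4, det_Mps] at h2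
  exact h2

lemma comp_sq_coeff_even (p : Polynomial ℚ) (k : ℕ) :
    (p.comp (Polynomial.X ^ 2)).coeff (2*k) = p.coeff k := by
  induction p using Polynomial.induction_on' with
  | add f g hf hg => simp [Polynomial.add_comp, hf, hg]
  | monomial m a =>
    rw [← Polynomial.C_mul_X_pow_eq_monomial, Polynomial.mul_comp, Polynomial.C_comp,
      Polynomial.pow_comp, Polynomial.X_comp, ← pow_mul]
    rw [Polynomial.coeff_C_mul, Polynomial.coeff_C_mul, Polynomial.coeff_X_pow,
      Polynomial.coeff_X_pow]
    congr 1
    by_cases h : m = k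
    · rw [if_pos (by omega), if_pos (by omega)]
    · rw [if_neg (by omega), if_neg (by omega)]

lemma comp_sq_coeff_odd (p : Polynomial ℚ) (k : ℕ) (hk : Odd k) :
    (p.comp (Polynomial.X ^ 2)).coeff k = 0 := by
  induction p using Polynomial.induction_on' with
  | add f g hf hg => simp [Polynomial.add_comp, hf, hg]
  | monomial m a =>
    rw [← Polynomial.C_mul_X_pow_eq_monomial, Polynomial.mul_comp, Polynomial.C_comp,
      Polynomial.pow_comp, Polynomial.X_comp, ← pow_mul]
    rw [Polynomial.coeff_C_mul, Polynomial.coeff_X_pow]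
    rw [if_neg (by rcases hk with ⟨j, rfl⟩; omega)]
    ring

lemma sum_range_even {M : Type*} [AddCommMonoid M] (g : ℕ → M) (h : ∀ j, Odd j → g j = 0)
    (n : ℕ) : ∑ j ∈ Finset.range (2*n+1), g j = ∑ k ∈ Finset.range (n+1), g (2*k) := by
  induction n with
  | zero => simp
  | succ m ih =>
    have e1 : 2*(m+1)+1 = (2*m+1) + 1 + 1 := by omega
    rw [e1, Finset.sum_range_succ, Finset.sum_range_succ, ih,
      Finset.sum_range_succ (fun k => g (2*k)) (m+1)]
    rw [h (2*m+1) ⟨m, by omega⟩]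
    have e2 : 2*m+1+1 = 2*(m+1) := by omega
    rw [e2, add_zero]

end BBall

theorem bball_gf_rational : ∀ w : ℕ, 1 ≤ w →
    (Q w : PowerSeries ℚ) * F w = (Q (w - 1) : PowerSeries ℚ) := by
  intro w hw
  have key : BBall.toPS (BBall.qc w) * BBall.Wps w 0 = BBall.toPS (BBall.qc (w-1)) := by
    have h := BBall.main_ps w
    have d1 : BBall.Dd (w+1) = BBall.qc w := BBall.dd_eq_qc w
    have d0 : BBall.Dd w = BBall.qc (w-1) := by
      obtain ⟨v, rfl⟩ : ∃ v, w = v + 1 := ⟨w - 1, by omega⟩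
      exact BBall.dd_eq_qc v
    rw [d1, d0] at h
    exact h
  ext n
  have hkey := congrArg (PowerSeries.coeff (2*n)) key
  rw [PowerSeries.coeff_mul] at hkey
  rw [Finset.Nat.sum_antidiagonal_eq_sum_range_succ_mk] at hkey
  have hWc : ∀ b : ℕ, (PowerSeries.coeff b) (BBall.Wps w 0) = (BBall.cnt w 0 (b : ℤ) : ℚ) := by
    intro b
    rw [BBall.Wps, PowerSeries.coeff_mk]
  have htoPS : ∀ (p : Polynomial ℚ) (m : ℕ),
      (PowerSeries.coeff m) (BBall.toPS p) = p.coeff m := by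
    intro p m
    rw [BBall.toPS, Polynomial.coeToPowerSeries.ringHom_apply, Polynomial.coeff_coe]
  have hg : ∀ i ∈ Finset.range (2*n+1),
      (PowerSeries.coeff i) (BBall.toPS (BBall.qc w))
        * (PowerSeries.coeff (2*n - i)) (BBall.Wps w 0)
      = (fun i => ((BBall.qc w).coeff i) * (BBall.cnt w 0 ((2*n - i : ℕ) : ℤ) : ℚ)) i := by
    intro i _
    rw [htoPS, hWc]
  rw [Finset.sum_congr rfl hg] at hkey
  rw [BBall.sum_range_even _ ?hodd n] at hkey
  case hodd =>
    intro j hj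
    have hz : (BBall.qc w).coeff j = 0 := BBall.comp_sq_coeff_odd (Q w) j hj
    simp [hz]
  rw [htoPS] at hkey
  -- now the goal side
  rw [PowerSeries.coeff_mul, Finset.Nat.sum_antidiagonal_eq_sum_range_succ_mk]
  have hgoal : ∀ i ∈ Finset.range (n+1),
      (PowerSeries.coeff i) ((Q w : PowerSeries ℚ))
        * (PowerSeries.coeff (n - i)) (F w)
      = (fun i => ((BBall.qc w).coeff (2*i)) * (BBall.cnt w 0 ((2*n - 2*i : ℕ) : ℤ) : ℚ)) i := by
    intro i hi
    rw [Finset.mem_range] at hi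
    change _ = (BBall.qc w).coeff (2*i) * (BBall.cnt w 0 ((2*n - 2*i : ℕ) : ℤ) : ℚ)
    rw [Polynomial.coeff_coe]
    have hq : (BBall.qc w).coeff (2*i) = (Q w).coeff i := by
      simp only [BBall.qc]
      exact BBall.comp_sq_coeff_even (Q w) i
    rw [hq]
    congr 1
    rw [F, PowerSeries.coeff_mk]
    rw [BBall.cnt_eq_walkCount]
    congr 2
    push_cast
    omega
  rw [Finset.sum_congr rfl hgoal, Polynomial.coeff_coe]
  have hq2 : (BBall.qc (w-1)).coeff (2*n) = (Q (w-1)).coeff n := by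
    simp only [BBall.qc]
    exact BBall.comp_sq_coeff_even (Q (w-1)) n
  rw [← hq2, ← hkey]
end

section
/- Suppose formal power series F_w, G_w (w ≥ 0) in the variable s satisfy, for all w ≥ 1: F_w = 1 + F_w(s²F_{w-1} + 2s³G_{w-1} + s⁴J_{w-1}) where J_{w-1} = F_{w-2} + G_{w-1}(sF_{w-2} + s²G_{w-2}) for w ≥ 2, and G_w = F_w(sF_{w-1} + s²G_{w-1}), with initial conditions F_0 = 1, G_0 = 0, F_1 = 1/(1-s²), G_1 = s/(1-s²). Then for all w ≥ 4: F_w = 1 - s²F_w + 2s²F_wF_{w-1} + 2s⁴F_wF_{w-1}F_{w-2} - (s⁶+s⁸)F_wF_{w-1}F_{w-2}F_{w-3} + s^{10}F_wF_{w-1}F_{w-2}F_{w-3}F_{w-4}. -/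
open PowerSeries

theorem elimination_step (F G J : ℕ → PowerSeries ℚ)
    (hF0 : F 0 = 1) (hG0 : G 0 = 0)
    (hF1 : (1 - PowerSeries.X ^ 2) * F 1 = 1)
    (hG1 : (1 - PowerSeries.X ^ 2) * G 1 = PowerSeries.X)
    (hF : ∀ w : ℕ, 1 ≤ w →
      F w = 1 + F w * (PowerSeries.X ^ 2 * F (w - 1) + 2 * PowerSeries.X ^ 3 * G (w - 1)
        + PowerSeries.X ^ 4 * J (w - 1)))
    (hJ : ∀ w : ℕ, 2 ≤ w →
      J (w - 1) = F (w - 2) + G (w - 1) * (PowerSeries.X * F (w - 2)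
        + PowerSeries.X ^ 2 * G (w - 2)))
    (hG : ∀ w : ℕ, 1 ≤ w →
      G w = F w * (PowerSeries.X * F (w - 1) + PowerSeries.X ^ 2 * G (w - 1))) :
    ∀ w : ℕ, 4 ≤ w →
      F w = 1 - PowerSeries.X ^ 2 * F w + 2 * PowerSeries.X ^ 2 * F w * F (w - 1)
        + 2 * PowerSeries.X ^ 4 * F w * F (w - 1) * F (w - 2)
        - (PowerSeries.X ^ 6 + PowerSeries.X ^ 8) * F w * F (w - 1) * F (w - 2) * F (w - 3)
        + PowerSeries.X ^ 10 * F w * F (w - 1) * F (w - 2) * F (w - 3) * F (w - 4) := by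
  intro w hw
  obtain ⟨k, rfl⟩ : ∃ k, w = k + 4 := ⟨w - 4, by omega⟩
  have i1 : k + 4 - 1 = k + 3 := by omega
  have i2 : k + 4 - 2 = k + 2 := by omega
  have i3 : k + 4 - 3 = k + 1 := by omega
  have i4 : k + 4 - 4 = k := by omega
  set X : PowerSeries ℚ := PowerSeries.X with hX
  set a := F (k + 4)
  set b := F (k + 3)
  set c := F (k + 2)
  set d := F (k + 1)
  set e := F k
  set gb := G (k + 3)
  set gc := G (k + 2)
  set gd := G (k + 1)
  set ge := G k
  -- the G-recurrence at levels k+3, k+2, k+1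
  have h1 : gb = b * (X * c + X ^ 2 * gc) := by
    have := hG (k + 3) (by omega)
    simpa using this
  have h2 : gc = c * (X * d + X ^ 2 * gd) := by
    have := hG (k + 2) (by omega)
    simpa using this
  have h3 : gd = d * (X * e + X ^ 2 * ge) := by
    have := hG (k + 1) (by omega)
    simpa using this
  -- the F-recurrence with J substituted, at levels k+4, k+3, k+2
  have h4 : a = 1 + a * (X ^ 2 * b + 2 * X ^ 3 * gb
      + X ^ 4 * (c + gb * (X * c + X ^ 2 * gc))) := by
    have h := hF (k + 4) (by omega)
    rw [hJ (k + 4) (by omega)] at h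
    simpa [i1, i2] using h
  have h5 : b = 1 + b * (X ^ 2 * c + 2 * X ^ 3 * gc
      + X ^ 4 * (d + gc * (X * d + X ^ 2 * gd))) := by
    have h := hF (k + 3) (by omega)
    rw [hJ (k + 3) (by omega)] at h
    simpa using h
  have h6 : c = 1 + c * (X ^ 2 * d + 2 * X ^ 3 * gd
      + X ^ 4 * (e + gd * (X * e + X ^ 2 * ge))) := by
    have h := hF (k + 2) (by omega)
    rw [hJ (k + 2) (by omega)] at h
    simpa using h
  -- eliminate the mixed G-terms: F_w = 1 + F_w F_{w-1} v^2 + X^4 F_w F_{w-2}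
  have e0 : a = 1 + a * b * (X + X ^ 2 * (X * c + X ^ 2 * gc)) ^ 2 + X ^ 4 * a * c := by
    linear_combination h4 + a * (2 * X ^ 3 + X ^ 4 * (X * c + X ^ 2 * gc)) * h1
  have e1 : b = 1 + b * c * (X + X ^ 2 * (X * d + X ^ 2 * gd)) ^ 2 + X ^ 4 * b * d := by
    linear_combination h5 + b * (2 * X ^ 3 + X ^ 4 * (X * d + X ^ 2 * gd)) * h2
  have e2 : c = 1 + c * d * (X + X ^ 2 * (X * e + X ^ 2 * ge)) ^ 2 + X ^ 4 * c * e := by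
    linear_combination h6 + c * (2 * X ^ 3 + X ^ 4 * (X * e + X ^ 2 * ge)) * h3
  set V2 : PowerSeries ℚ := X + X ^ 2 * (X * d + X ^ 2 * gd) with hV2
  set V3 : PowerSeries ℚ := X + X ^ 2 * (X * e + X ^ 2 * ge) with hV3
  have hA : 2 * X ^ 3 * a * b * c * V2
      = a - 1 - X ^ 2 * a * b - X ^ 4 * a * b * c + X ^ 8 * a * b * c * d := by
    linear_combination (-1 : PowerSeries ℚ) * e0 + X ^ 4 * a * c * e1
      - a * b * X ^ 4 * ((X + X ^ 2 * (X * c + X ^ 2 * gc)) + X + X ^ 2 * c * V2) * h2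
  have hB : 2 * X ^ 3 * b * c * d * V3
      = b - 1 - X ^ 2 * b * c - X ^ 4 * b * c * d + X ^ 8 * b * c * d * e := by
    linear_combination (-1 : PowerSeries ℚ) * e1 + X ^ 4 * b * d * e2
      - b * c * X ^ 4 * (V2 + X + X ^ 2 * d * V3) * h3
  have hfin : a = 1 - X ^ 2 * a + 2 * X ^ 2 * a * b + 2 * X ^ 4 * a * b * c
      - (X ^ 6 + X ^ 8) * a * b * c * d + X ^ 10 * a * b * c * d * e := by
    linear_combination (-1 : PowerSeries ℚ) * hA + X ^ 2 * a * hB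
      + 2 * X ^ 7 * a * b * c * h3
  rw [i1, i2, i3, i4]
  linear_combination hfin
end
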